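/- arXiv:2012.12920 — 5 statements merged into one kernel-verified Lean document; each statement's English description precedes it below -/
import Mathlib

section
/- Let b ∈ ℂ with Re(b) ≥ 0, and let A on L²(ℝ⁺) have domain {f ∈ H²(ℝ⁺) : f'(0) = b f(0)} with Af = -i f'' + i f. Then for every f ∈ D(A), Im⟨f, Af⟩ = Re(b)·|f(0)|² + ‖f'‖² + ‖f‖²; in particular A is dissipative. -/
/-!
Integration by parts on `[0, R]`, which for primitives of integrable functions follows from
Fubini on the square split along the diagonal, gives
`∫₀ᴿ conj f · f'' = conj f(R) f'(R) - conj f(0) f'(0) - ∫₀ᴿ |f'|²`.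
Since `f, f', f'' ∈ L²`, the integrals converge as `R → ∞`, and the boundary term `conj f · f'`
is integrable on `ℝ⁺`, so its limit at infinity must be `0`. The boundary condition turns
`conj f(0) f'(0)` into `b |f(0)|²`, and taking imaginary parts of
`-i ∫ conj f · f'' + i ‖f‖²` gives the identity.
-/

open MeasureTheory Set Filter Topology ComplexConjugate

section Primitive

variable {𝕜 : Type*} [RCLike 𝕜] {a b : ℝ} {u w : ℝ → 𝕜}

theorem integral_indicator_le_mul_eq_integral_mul_primitive
    (huw : Integrable (fun p : ℝ × ℝ => u p.1 * w p.2)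
      ((volume.restrict (Ioc a b)).prod (volume.restrict (Ioc a b)))) :
    ∫ p, {p : ℝ × ℝ | p.2 ≤ p.1}.indicator (fun p => u p.1 * w p.2) p
        ∂(volume.restrict (Ioc a b)).prod (volume.restrict (Ioc a b))
      = ∫ x in Ioc a b, u x * ∫ t in Ioc a x, w t := by
  rw [integral_prod _ (huw.indicator (measurableSet_le measurable_snd measurable_fst))]
  refine setIntegral_congr_fun measurableSet_Ioc fun x hx => ?_
  have hslice : (fun t => {p : ℝ × ℝ | p.2 ≤ p.1}.indicator (fun p => u p.1 * w p.2) (x, t))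
      = (Iic x).indicator fun t => u x * w t := by
    ext t; by_cases h : t ≤ x <;> simp [indicator, h]
  rw [hslice, integral_indicator measurableSet_Iic, Measure.restrict_restrict measurableSet_Iic,
    integral_const_mul, Iic_inter_Ioc_of_le hx.2]

theorem integral_indicator_lt_mul_eq_integral_primitive_mul
    (huw : Integrable (fun p : ℝ × ℝ => u p.1 * w p.2)
      ((volume.restrict (Ioc a b)).prod (volume.restrict (Ioc a b)))) :
    ∫ p, {p : ℝ × ℝ | p.1 < p.2}.indicator (fun p => u p.1 * w p.2) p
        ∂(volume.restrict (Ioc a b)).prod (volume.restrict (Ioc a b))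
      = ∫ x in Ioc a b, (∫ t in Ioc a x, u t) * w x := by
  rw [integral_prod_symm _ (huw.indicator (measurableSet_lt measurable_fst measurable_snd))]
  refine setIntegral_congr_fun measurableSet_Ioc fun x hx => ?_
  have hslice : (fun t => {p : ℝ × ℝ | p.1 < p.2}.indicator (fun p => u p.1 * w p.2) (t, x))
      = (Iio x).indicator fun t => u t * w x := by
    ext t; by_cases h : t < x <;> simp [indicator, h]
  have hIio : Iio x ∩ Ioc a b = Ioo a x := by
    ext t; simp only [mem_inter_iff, mem_Iio, mem_Ioc, mem_Ioo]
    exact ⟨fun h => ⟨h.2.1, h.1⟩, fun h => ⟨h.2, h.1, h.2.le.trans hx.2⟩⟩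
  rw [hslice, integral_indicator measurableSet_Iio, Measure.restrict_restrict measurableSet_Iio,
    hIio, integral_mul_const, integral_Ioc_eq_integral_Ioo]

theorem integral_mul_primitive_add_integral_primitive_mul
    (hu : IntegrableOn u (Ioc a b)) (hw : IntegrableOn w (Ioc a b)) :
    (∫ x in Ioc a b, u x * ∫ t in Ioc a x, w t) + ∫ x in Ioc a b, (∫ t in Ioc a x, u t) * w x
      = (∫ x in Ioc a b, u x) * ∫ x in Ioc a b, w x := by
  have huw := hu.mul_prod hw
  have hcompl : {p : ℝ × ℝ | p.2 ≤ p.1}ᶜ = {p | p.1 < p.2} := by ext; simp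
  rw [← integral_indicator_le_mul_eq_integral_mul_primitive huw,
    ← integral_indicator_lt_mul_eq_integral_primitive_mul huw, ← hcompl,
    ← integral_add (huw.indicator (measurableSet_le measurable_snd measurable_fst))
      (huw.indicator (measurableSet_le measurable_snd measurable_fst).compl),
    ← integral_prod_mul]
  simp only [indicator_self_add_compl_apply]

theorem intervalIntegral.integral_mul_primitive_add_integral_primitive_mul (hab : a ≤ b)
    (hu : IntervalIntegrable u volume a b) (hw : IntervalIntegrable w volume a b) :
    (∫ x in a..b, u x * ∫ t in a..x, w t) + ∫ x in a..b, (∫ t in a..x, u t) * w x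
      = (∫ x in a..b, u x) * ∫ x in a..b, w x := by
  simp only [intervalIntegral.integral_of_le hab]
  rw [← _root_.integral_mul_primitive_add_integral_primitive_mul hu.1 hw.1]
  congr 1 <;> refine setIntegral_congr_fun measurableSet_Ioc fun x hx => ?_ <;>
    simp only [intervalIntegral.integral_of_le hx.1.le]

theorem intervalIntegral.integral_mul_add_mul_eq_sub_of_eq_add_integral {F G : ℝ → 𝕜}
    (hab : a ≤ b) (hu : IntervalIntegrable u volume a b) (hw : IntervalIntegrable w volume a b)
    (hF : ∀ x ∈ Icc a b, F x = F a + ∫ t in a..x, u t)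
    (hG : ∀ x ∈ Icc a b, G x = G a + ∫ t in a..x, w t) :
    ∫ x in a..b, (u x * G x + F x * w x) = F b * G b - F a * G a := by
  have hPu : ContinuousOn (fun x => ∫ t in a..x, u t) (uIcc a b) :=
    intervalIntegral.continuousOn_primitive_interval' hu left_mem_uIcc
  have hPw : ContinuousOn (fun x => ∫ t in a..x, w t) (uIcc a b) :=
    intervalIntegral.continuousOn_primitive_interval' hw left_mem_uIcc
  have hsplit : EqOn (fun x => u x * G x + F x * w x)
      (fun x => (u x * G a + F a * w x)
        + (u x * (∫ t in a..x, w t) + (∫ t in a..x, u t) * w x)) (uIcc a b) := by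
    intro x hx
    rw [uIcc_of_le hab] at hx
    simp only [hF x hx, hG x hx]
    ring
  rw [intervalIntegral.integral_congr hsplit,
    intervalIntegral.integral_add ((hu.mul_const _).add (hw.const_mul _))
      ((hu.mul_continuousOn hPw).add (hw.continuousOn_mul hPu)),
    intervalIntegral.integral_add (hu.mul_const _) (hw.const_mul _),
    intervalIntegral.integral_add (hu.mul_continuousOn hPw) (hw.continuousOn_mul hPu),
    intervalIntegral.integral_mul_primitive_add_integral_primitive_mul hab hu hw,
    intervalIntegral.integral_mul_const, intervalIntegral.integral_const_mul,
    hF b (right_mem_Icc.2 hab), hG b (right_mem_Icc.2 hab)]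
  ring

end Primitive

section HalfLine

variable {𝕜 : Type*} [RCLike 𝕜]

theorem MeasureTheory.MemLp.integrable_conj_mul {α : Type*} [MeasurableSpace α] {μ : Measure α}
    {g h : α → 𝕜} (hg : MemLp g 2 μ) (hh : MemLp h 2 μ) :
    Integrable (fun x => conj (g x) * h x) μ :=
  hg.star.integrable_mul hh

theorem integral_conj_mul_self {α : Type*} [MeasurableSpace α] {μ : Measure α} (g : α → 𝕜) :
    ∫ x, conj (g x) * g x ∂μ = ((∫ x, ‖g x‖ ^ 2 ∂μ : ℝ) : 𝕜) := by
  simp_rw [RCLike.conj_mul, ← RCLike.ofReal_pow]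
  exact integral_ofReal

variable {E : Type*} [NormedAddCommGroup E] {a : ℝ}

theorem MeasureTheory.MemLp.intervalIntegrable_of_restrict_Ioi {p : ENNReal} (hp : 1 ≤ p)
    {b : ℝ} (hab : a ≤ b) {g : ℝ → E} (hg : MemLp g p (volume.restrict (Ioi a))) :
    IntervalIntegrable g volume a b := by
  rw [intervalIntegrable_iff_integrableOn_Ioc_of_le hab]
  have hg' := hg.restrict (Ioc a b)
  rw [Measure.restrict_restrict measurableSet_Ioc, inter_eq_left.2 Ioc_subset_Ioi_self] at hg'
  exact hg'.integrable hp

theorem eq_zero_of_integrableOn_Ioi_of_tendsto {g : ℝ → E} {L : E} (hg : IntegrableOn g (Ioi a))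
    (hL : Tendsto g atTop (𝓝 L)) : L = 0 := by
  refine IntegrableAtFilter.eq_zero_of_tendsto ⟨Ioi a, Ioi_mem_atTop a, hg⟩ (fun s hs => ?_) hL
  obtain ⟨c, hc⟩ := mem_atTop_sets.1 hs
  exact top_le_iff.1 (Real.volume_Ici (a := c) ▸ measure_mono fun x hx => hc x hx)

theorem integral_Ioi_conj_mul_eq_of_eq_add_integral {f f' f'' : ℝ → 𝕜}
    (hf : MemLp f 2 (volume.restrict (Ioi a))) (hf' : MemLp f' 2 (volume.restrict (Ioi a)))
    (hf'' : MemLp f'' 2 (volume.restrict (Ioi a)))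
    (hrep : ∀ x, a ≤ x → f x = f a + ∫ t in a..x, f' t)
    (hrep' : ∀ x, a ≤ x → f' x = f' a + ∫ t in a..x, f'' t) :
    ∫ x in Ioi a, conj (f x) * f'' x
      = -(conj (f a) * f' a) - ((∫ x in Ioi a, ‖f' x‖ ^ 2 : ℝ) : 𝕜) := by
  have hpart : ∀ R, a ≤ R → ∫ x in a..R, (conj (f' x) * f' x + conj (f x) * f'' x)
      = conj (f R) * f' R - conj (f a) * f' a := fun R hR =>
    intervalIntegral.integral_mul_add_mul_eq_sub_of_eq_add_integral hR
      (hf'.star.intervalIntegrable_of_restrict_Ioi one_le_two hR)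
      (hf''.intervalIntegrable_of_restrict_Ioi one_le_two hR)
      (fun x hx => by
        rw [hrep x hx.1, map_add, intervalIntegral.integral_of_le hx.1,
          intervalIntegral.integral_of_le hx.1, integral_conj])
      fun x hx => hrep' x hx.1
  have hint : IntegrableOn (fun x => conj (f' x) * f' x + conj (f x) * f'' x) (Ioi a) :=
    (hf'.integrable_conj_mul hf').add (hf.integrable_conj_mul hf'')
  have hlim : Tendsto (fun R => conj (f R) * f' R) atTop
      (𝓝 (conj (f a) * f' a + ∫ x in Ioi a, (conj (f' x) * f' x + conj (f x) * f'' x))) := by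
    refine ((intervalIntegral_tendsto_integral_Ioi a hint tendsto_id).const_add _).congr' ?_
    filter_upwards [eventually_ge_atTop a] with R hR
    rw [id, hpart R hR]
    ring
  have hzero := eq_zero_of_integrableOn_Ioi_of_tendsto (hf.integrable_conj_mul hf') hlim
  rw [integral_add (hf'.integrable_conj_mul hf') (hf.integrable_conj_mul hf''),
    integral_conj_mul_self] at hzero
  linear_combination hzero

end HalfLine

/-- `f ∈ H²(ℝ⁺)` is encoded by `f, f', f'' ∈ L²(0,∞)` together with the absolute continuity
relations `f x = f 0 + ∫₀ˣ f'` and `f' x = f' 0 + ∫₀ˣ f''`. -/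
theorem stmt_3 (b : ℂ) (hb : 0 ≤ b.re) (f f' f'' : ℝ → ℂ)
    (hf : MemLp f 2 (volume.restrict (Set.Ioi (0 : ℝ))))
    (hf' : MemLp f' 2 (volume.restrict (Set.Ioi (0 : ℝ))))
    (hf'' : MemLp f'' 2 (volume.restrict (Set.Ioi (0 : ℝ))))
    (hrep : ∀ x : ℝ, 0 ≤ x → f x = f 0 + ∫ t in (0 : ℝ)..x, f' t)
    (hrep' : ∀ x : ℝ, 0 ≤ x → f' x = f' 0 + ∫ t in (0 : ℝ)..x, f'' t)
    (hbc : f' 0 = b * f 0) :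
    (∫ x in Set.Ioi (0 : ℝ),
        (starRingEnd ℂ) (f x) * (-Complex.I * f'' x + Complex.I * f x)).im
      = b.re * ‖f 0‖ ^ 2 + (∫ x in Set.Ioi (0 : ℝ), ‖f' x‖ ^ 2)
        + ∫ x in Set.Ioi (0 : ℝ), ‖f x‖ ^ 2 ∧
    0 ≤ (∫ x in Set.Ioi (0 : ℝ),
        (starRingEnd ℂ) (f x) * (-Complex.I * f'' x + Complex.I * f x)).im := by
  have hsplit : ∫ x in Ioi (0 : ℝ), conj (f x) * (-Complex.I * f'' x + Complex.I * f x)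
      = -Complex.I * (∫ x in Ioi (0 : ℝ), conj (f x) * f'' x)
        + Complex.I * ∫ x in Ioi (0 : ℝ), conj (f x) * f x := by
    rw [← integral_const_mul, ← integral_const_mul, ← integral_add
      ((hf.integrable_conj_mul hf'').const_mul _) ((hf.integrable_conj_mul hf).const_mul _)]
    congr 1 with x
    ring
  have hboundary : conj (f 0) * f' 0 = b * ((‖f 0‖ ^ 2 : ℝ) : ℂ) := by
    rw [hbc, mul_left_comm, Complex.conj_mul', Complex.ofReal_pow]
  have hidentity : (∫ x in Ioi (0 : ℝ), conj (f x) * (-Complex.I * f'' x + Complex.I * f x)).im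
      = b.re * ‖f 0‖ ^ 2 + (∫ x in Ioi (0 : ℝ), ‖f' x‖ ^ 2) + ∫ x in Ioi (0 : ℝ), ‖f x‖ ^ 2 := by
    rw [hsplit, integral_Ioi_conj_mul_eq_of_eq_add_integral hf hf' hf'' hrep hrep',
      integral_conj_mul_self, hboundary]
    simp only [Complex.add_im, Complex.mul_im, Complex.mul_re, Complex.neg_re, Complex.neg_im,
      Complex.sub_re, Complex.sub_im, Complex.I_re, Complex.I_im, Complex.ofReal_re,
      Complex.ofReal_im, RCLike.ofReal_eq_complex_ofReal]
    ring
  refine ⟨hidentity, hidentity ▸ add_nonneg (add_nonneg ?_ ?_) ?_⟩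
  · exact mul_nonneg hb (sq_nonneg _)
  all_goals exact integral_nonneg fun _ => sq_nonneg _
end

section
/- Main theorem (sufficiency direction): Let A be a dissipative operator on a Hilbert space H whose form q_A(f) = Im⟨f,Af⟩ is closable and satisfies q_A(f) ≥ ε‖f‖² for some ε > 0; let V_A be the selfadjoint operator associated with the closure of q_A, and W_A the operator with domain ran(V_A^{1/2}↾D(A)) given by W_A g = A V_A^{-1/2} g. Let B ⊇ A be an extension with D(B) = D(A) ∔ 𝒱 for a complementary subspace 𝒱. If 𝒱 ⊂ D(W_A*) and Im⟨v, Bv⟩ ≥ (1/4)‖(V_A^{-1/2} B - W_A*) v‖² for every v ∈ 𝒱, then B is dissipative. -/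
/-!
Split `f ∈ D(B)` as `f = u + v` with `u ∈ D(A)`, `v ∈ 𝒱`, and put `a = V_A^{1/2} u`,
`d = (V_A^{-1/2} B - W_A^*) v`. Since `V_A^{-1/2}` is symmetric and `W_A^*` is adjoint to
`A V_A^{-1/2}`, the cross terms of `Im ⟪f, B f⟫` collapse to `Im ⟪a, d⟫`, so
`Im ⟪f, B f⟫ = ‖a‖² + Im ⟪a, d⟫ + Im ⟪v, B v⟫ ≥ ‖a‖² - ‖a‖ ‖d‖ + ‖d‖² / 4 = (‖a‖ - ‖d‖ / 2)² ≥ 0`.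
-/

open Filter Topology

local notation "⟪" x ", " y "⟫" => @inner ℂ _ _ x y

section InnerProduct

variable {E : Type*} [NormedAddCommGroup E] [InnerProductSpace ℂ E]

theorem ContinuousLinearMap.isSymmetric_of_leftInverse_of_surjective {Q : E →ₗ.[ℂ] E}
    (hQsym : ∀ f g : Q.domain, ⟪Q f, (g : E)⟫ = ⟪(f : E), Q g⟫) {R : E →L[ℂ] E}
    (hRQ : ∀ f : Q.domain, R (Q f) = (f : E)) (hQsurj : ∀ g : E, ∃ f : Q.domain, Q f = g) :
    (R : E →ₗ[ℂ] E).IsSymmetric := by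
  intro x y
  obtain ⟨f, rfl⟩ := hQsurj x
  obtain ⟨g, rfl⟩ := hQsurj y
  simp only [ContinuousLinearMap.coe_coe, hRQ, hQsym]

theorem LinearPMap.apply_add_of_le {A B : E →ₗ.[ℂ] E} (hAB : A ≤ B) {f : B.domain}
    {u : A.domain} {v : B.domain} (hf : (f : E) = u + v) : B f = A u + B v := by
  rw [show f = ⟨u, hAB.1 u.2⟩ + v from Subtype.ext hf, B.map_add, ← hAB.2 rfl]

theorem im_inner_add_add_of_inner_eq {u v x y a r w : E} (hvx : ⟪v, x⟫ = ⟪w, a⟫)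
    (huy : ⟪u, y⟫ = ⟪a, r⟫) :
    (⟪u + v, x + y⟫).im = (⟪u, x⟫).im + (⟪a, r - w⟫).im + (⟪v, y⟫).im := by
  have hwa : (⟪v, x⟫).im = -(⟪a, w⟫).im := by
    rw [hvx, ← inner_conj_symm w a, Complex.conj_im]
  simp only [inner_add_left, inner_add_right, inner_sub_right, Complex.add_im,
    Complex.sub_im, hwa, huy]
  ring

theorem norm_sq_add_im_inner_add_nonneg (a d : E) {t : ℝ} (ht : 1 / 4 * ‖d‖ ^ 2 ≤ t) :
    0 ≤ ‖a‖ ^ 2 + (⟪a, d⟫).im + t := by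
  have hcross : -(‖a‖ * ‖d‖) ≤ (⟪a, d⟫).im :=
    neg_le_of_abs_le ((Complex.abs_im_le_norm _).trans (norm_inner_le_norm a d))
  nlinarith [sq_nonneg (‖a‖ - ‖d‖ / 2)]

section FormClosure

variable (A : E →ₗ.[ℂ] E)

def FormCauchy (s : ℕ → A.domain) : Prop :=
  ∀ δ : ℝ, 0 < δ → ∃ N, ∀ n ≥ N, ∀ m ≥ N, (⟪((s n - s m : A.domain) : E), A (s n - s m)⟫).im < δ

theorem formCauchy_const (u : A.domain) : FormCauchy A fun _ => u :=
  fun δ hδ => ⟨0, fun _ _ _ _ => by simpa using hδ⟩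

variable {A} {Q : E →ₗ.[ℂ] E}

theorem mem_domain_of_formClosure
    (hQdom : ∀ f : E, f ∈ Q.domain ↔ ∃ s : ℕ → A.domain,
      Tendsto (fun n => ((s n : E))) atTop (𝓝 f) ∧ FormCauchy A s)
    (u : A.domain) : (u : E) ∈ Q.domain :=
  (hQdom u).mpr ⟨_, tendsto_const_nhds, formCauchy_const A u⟩

theorem norm_sq_eq_im_inner_of_formClosure
    (hQval : ∀ (f : Q.domain) (s : ℕ → A.domain),
      Tendsto (fun n => ((s n : E))) atTop (𝓝 (f : E)) → FormCauchy A s →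
      Tendsto (fun n => (⟪((s n : E)), A (s n)⟫).im) atTop (𝓝 (‖Q f‖ ^ 2)))
    (u : A.domain) (hu : (u : E) ∈ Q.domain) : ‖Q ⟨u, hu⟩‖ ^ 2 = (⟪(u : E), A u⟫).im :=
  tendsto_nhds_unique (hQval ⟨u, hu⟩ _ tendsto_const_nhds (formCauchy_const A u))
    tendsto_const_nhds

end FormClosure

end InnerProduct

/-- `Q = V_A^{1/2}`: `hQdom` and `hQval` say that `Q` is the square root of the operator of the
closure of the form `Im ⟪f, A f⟫`; `R = V_A^{-1/2}`. The operator `W_A` has domain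
`{g : R g ∈ D(A)}` and acts by `g ↦ A (R g)`, so the first clause of `hcond` says
`v ∈ D(W_A^*)` with `W_A^* v = w`. -/
theorem stmt_5_general {E : Type*} [NormedAddCommGroup E] [InnerProductSpace ℂ E]
    (A : E →ₗ.[ℂ] E)
    (Q : E →ₗ.[ℂ] E)
    (hQsym : ∀ f g : Q.domain, ⟪Q f, (g : E)⟫ = ⟪(f : E), Q g⟫)
    (hQdom : ∀ f : E, f ∈ Q.domain ↔ ∃ s : ℕ → A.domain,
      Tendsto (fun n => ((s n : E))) atTop (𝓝 f) ∧
      ∀ δ : ℝ, 0 < δ → ∃ N, ∀ n ≥ N, ∀ m ≥ N,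
        (⟪((s n - s m : A.domain) : E), A (s n - s m)⟫).im < δ)
    (hQval : ∀ (f : Q.domain) (s : ℕ → A.domain),
      Tendsto (fun n => ((s n : E))) atTop (𝓝 (f : E)) →
      (∀ δ : ℝ, 0 < δ → ∃ N, ∀ n ≥ N, ∀ m ≥ N,
        (⟪((s n - s m : A.domain) : E), A (s n - s m)⟫).im < δ) →
      Tendsto (fun n => (⟪((s n : E)), A (s n)⟫).im) atTop (𝓝 (‖Q f‖ ^ 2)))
    (R : E →L[ℂ] E)
    (hRQ : ∀ f : Q.domain, R (Q f) = (f : E))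
    (hQsurj : ∀ g : E, ∃ f : Q.domain, Q f = g)
    (B : E →ₗ.[ℂ] E) (hAB : A ≤ B)
    (𝒱 : Submodule ℂ E) (h𝒱B : 𝒱 ≤ B.domain)
    (hsum : A.domain ⊔ 𝒱 = B.domain)
    (hcond : ∀ (v : E) (hv : v ∈ 𝒱), ∃ w : E,
      (∀ (g : E) (hg : R g ∈ A.domain), ⟪v, A ⟨R g, hg⟩⟫ = ⟪w, g⟫) ∧
      (1 / 4 : ℝ) * ‖R (B ⟨v, h𝒱B hv⟩) - w‖ ^ 2 ≤ (⟪v, B ⟨v, h𝒱B hv⟩⟫).im) :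
    ∀ f : B.domain, 0 ≤ (⟪(f : E), B f⟫).im := by
  intro f
  obtain ⟨u, hu, v, hv, huv⟩ := Submodule.mem_sup.mp (by rw [hsum]; exact f.2)
  obtain ⟨w, hw, hbound⟩ := hcond v hv
  have huQ := mem_domain_of_formClosure hQdom ⟨u, hu⟩
  set a := Q ⟨u, huQ⟩
  have hRa : R a = u := hRQ ⟨u, huQ⟩
  have hvAu : ⟪v, A ⟨u, hu⟩⟫ = ⟪w, a⟫ := by
    have h := hw a (by rwa [hRa])
    rwa [show (⟨R a, _⟩ : A.domain) = ⟨u, hu⟩ from Subtype.ext hRa] at h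
  have huBv : ⟪u, B ⟨v, h𝒱B hv⟩⟫ = ⟪a, R (B ⟨v, h𝒱B hv⟩)⟫ := by
    rw [← hRa]
    exact ContinuousLinearMap.isSymmetric_of_leftInverse_of_surjective hQsym hRQ hQsurj _ _
  rw [LinearPMap.apply_add_of_le hAB (u := ⟨u, hu⟩) (v := ⟨v, h𝒱B hv⟩) huv.symm, ← huv,
    im_inner_add_add_of_inner_eq hvAu huBv,
    ← norm_sq_eq_im_inner_of_formClosure hQval ⟨u, hu⟩ huQ]
  exact norm_sq_add_im_inner_add_nonneg a _ hbound

/-- **Main theorem, sufficiency direction.**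
Let `A` be a dissipative operator on a complex Hilbert space `E` whose quadratic form
`q_A(f) = Im ⟪f, A f⟫` is closable and satisfies `q_A(f) ≥ ε ‖f‖²` for some `ε > 0`.
Let `V_A` be the selfadjoint operator associated with the closure of `q_A`.  Here `Q = V_A^{1/2}`
is encoded by the hypotheses `hQsym, hQpos` (it is a nonnegative symmetric operator) together
with `hQdom, hQval`, which say that the domain of `Q` is the domain of the closure of `q_A`
(limits of `q_A`-Cauchy sequences from `D(A)`) and `‖Q f‖² = q_A'(f)`; `R = V_A^{-1/2}` is its
(bounded, everywhere defined) inverse.  The operator `W_A` has domain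
`ran (V_A^{1/2} ↾ D(A)) = {g : R g ∈ D(A)}` and acts by `W_A g = A V_A^{-1/2} g`; membership
`v ∈ D(W_A^*)` with `W_A^* v = w` is expressed by `∀ g, R g ∈ D(A) → ⟪v, A (R g)⟫ = ⟪w, g⟫`.
If `B ⊇ A` is an extension with `D(B) = D(A) ∔ 𝒱` and every `v ∈ 𝒱` lies in `D(W_A^*)` and
satisfies `Im ⟪v, B v⟫ ≥ (1/4) ‖(V_A^{-1/2} B - W_A^*) v‖²`, then `B` is dissipative. -/
theorem stmt_5 {E : Type*} [NormedAddCommGroup E] [InnerProductSpace ℂ E] [CompleteSpace E]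
    (A : E →ₗ.[ℂ] E) (hdense : Dense (A.domain : Set E))
    (hdiss : ∀ f : A.domain, 0 ≤ (⟪(f : E), A f⟫).im)
    (ε : ℝ) (hε : 0 < ε)
    (hpos : ∀ f : A.domain, ε * ‖(f : E)‖ ^ 2 ≤ (⟪(f : E), A f⟫).im)
    (Q : E →ₗ.[ℂ] E)
    (hQsym : ∀ f g : Q.domain, ⟪Q f, (g : E)⟫ = ⟪(f : E), Q g⟫)
    (hQpos : ∀ f : Q.domain, 0 ≤ (⟪(f : E), Q f⟫).re)
    (hQdom : ∀ f : E, f ∈ Q.domain ↔ ∃ s : ℕ → A.domain,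
      Tendsto (fun n => ((s n : E))) atTop (𝓝 f) ∧
      ∀ δ : ℝ, 0 < δ → ∃ N, ∀ n ≥ N, ∀ m ≥ N,
        (⟪((s n - s m : A.domain) : E), A (s n - s m)⟫).im < δ)
    (hQval : ∀ (f : Q.domain) (s : ℕ → A.domain),
      Tendsto (fun n => ((s n : E))) atTop (𝓝 (f : E)) →
      (∀ δ : ℝ, 0 < δ → ∃ N, ∀ n ≥ N, ∀ m ≥ N,
        (⟪((s n - s m : A.domain) : E), A (s n - s m)⟫).im < δ) →
      Tendsto (fun n => (⟪((s n : E)), A (s n)⟫).im) atTop (𝓝 (‖Q f‖ ^ 2)))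
    (R : E →L[ℂ] E)
    (hRQ : ∀ f : Q.domain, R (Q f) = (f : E))
    (hQsurj : ∀ g : E, ∃ f : Q.domain, Q f = g)
    (B : E →ₗ.[ℂ] E) (hAB : A ≤ B)
    (𝒱 : Submodule ℂ E) (h𝒱B : 𝒱 ≤ B.domain)
    (hdisj : A.domain ⊓ 𝒱 = ⊥) (hsum : A.domain ⊔ 𝒱 = B.domain)
    (hcond : ∀ (v : E) (hv : v ∈ 𝒱), ∃ w : E,
      (∀ (g : E) (hg : R g ∈ A.domain), ⟪v, A ⟨R g, hg⟩⟫ = ⟪w, g⟫) ∧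
      (1 / 4 : ℝ) * ‖R (B ⟨v, h𝒱B hv⟩) - w‖ ^ 2 ≤ (⟪v, B ⟨v, h𝒱B hv⟩⟫).im) :
    ∀ f : B.domain, 0 ≤ (⟪(f : E), B f⟫).im :=
  stmt_5_general A Q hQsym hQdom hQval R hRQ hQsurj B hAB 𝒱 h𝒱B hsum hcond
end

section
/- Main theorem (necessity direction): With A, V_A, W_A as above, if B ⊇ A is a dissipative extension with D(B) = D(A) ∔ 𝒱, then every v ∈ 𝒱 belongs to D(W_A*) and satisfies Im⟨v, Bv⟩ ≥ (1/4)‖(V_A^{-1/2} B - W_A*) v‖². -/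
/-!
For `v ∈ D(B)`, dissipativity of `B` makes `(x, y) ↦ (⟪x, B y⟫ - ⟪B x, y⟫) / 2i` a positive
semidefinite Hermitian form on `D(B)` with diagonal `Im ⟪x, B x⟫`, so Cauchy–Schwarz gives
`|⟪v, A x⟫ - ⟪B v, x⟫|² ≤ 4 Im ⟪v, B v⟫ Im ⟪x, A x⟫` for `x ∈ D(A)`. Taking `x = V_A^{-1/2} g`
the last factor is `‖g‖²`, so `g ↦ ⟪v, A V_A^{-1/2} g⟫ - ⟪V_A^{-1/2} B v, g⟫` is bounded by
`2 √(Im ⟪v, B v⟫)` on `D(W_A)`. Hahn–Banach and Riesz represent it by some `z` of that norm, and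
`W_A^* v = z + V_A^{-1/2} B v`.
-/

open Filter Topology

local notation "⟪" x ", " y "⟫" => @inner ℂ _ _ x y

theorem exists_norm_le_forall_inner_eq {𝕜 E : Type*} [RCLike 𝕜] [NormedAddCommGroup E]
    [InnerProductSpace 𝕜 E] [CompleteSpace E] {M : Submodule 𝕜 E} (φ : M →ₗ[𝕜] 𝕜) {C : ℝ}
    (hC : 0 ≤ C) (hφ : ∀ g : M, ‖φ g‖ ≤ C * ‖g‖) :
    ∃ z : E, ‖z‖ ≤ C ∧ ∀ g : M, inner 𝕜 z (g : E) = φ g := by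
  obtain ⟨Φ, hΦφ, hΦnorm⟩ := exists_extension_norm_eq M (φ.mkContinuous C hφ)
  refine ⟨(InnerProductSpace.toDual 𝕜 E).symm Φ, ?_, fun g => ?_⟩
  · rw [LinearIsometryEquiv.norm_map, hΦnorm]
    exact φ.mkContinuous_norm_le hC hφ
  · rw [InnerProductSpace.toDual_symm_apply, hΦφ, LinearMap.mkContinuous_apply]

namespace LinearPMap

variable {E : Type*} [NormedAddCommGroup E] [InnerProductSpace ℂ E]

noncomputable def dissipationForm (B : E →ₗ.[ℂ] E) (x y : B.domain) : ℂ :=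
  (⟪(x : E), B y⟫ - ⟪B x, (y : E)⟫) / (2 * Complex.I)

theorem dissipationForm_self (B : E →ₗ.[ℂ] E) (x : B.domain) :
    B.dissipationForm x x = (⟪(x : E), B x⟫).im := by
  rw [dissipationForm, ← inner_conj_symm (B x), Complex.sub_conj]
  push_cast
  field_simp

noncomputable abbrev dissipationCore (B : E →ₗ.[ℂ] E)
    (hB : ∀ f : B.domain, 0 ≤ (⟪(f : E), B f⟫).im) : PreInnerProductSpace.Core ℂ B.domain where
  inner := B.dissipationForm
  conj_inner_symm x y := by
    simp only [dissipationForm, map_div₀, _root_.map_sub, inner_conj_symm, map_mul,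
      Complex.conj_I, map_ofNat]
    ring
  re_inner_nonneg x := by
    change 0 ≤ (B.dissipationForm x x).re
    rw [dissipationForm_self]
    exact hB x
  add_left x y z := by
    simp only [dissipationForm, map_add, Submodule.coe_add, inner_add_left]
    ring
  smul_left x y r := by
    simp only [dissipationForm, map_smul, Submodule.coe_smul, inner_smul_left]
    ring

theorem norm_inner_sub_inner_sq_le (B : E →ₗ.[ℂ] E)
    (hB : ∀ f : B.domain, 0 ≤ (⟪(f : E), B f⟫).im) (x y : B.domain) :
    ‖⟪(x : E), B y⟫ - ⟪B x, (y : E)⟫‖ ^ 2 ≤ 4 * (⟪(x : E), B x⟫).im * (⟪(y : E), B y⟫).im := by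
  have cauchySchwarz :=
    InnerProductSpace.Core.inner_mul_inner_self_le (c := B.dissipationCore hB) x y
  rw [InnerProductSpace.Core.norm_inner_symm (c := B.dissipationCore hB) y x] at cauchySchwarz
  change ‖B.dissipationForm x y‖ * ‖B.dissipationForm x y‖ ≤
    (B.dissipationForm x x).re * (B.dissipationForm y y).re at cauchySchwarz
  simp only [dissipationForm_self, Complex.ofReal_re] at cauchySchwarz
  rw [dissipationForm, norm_div, norm_mul, Complex.norm_I, Complex.norm_two] at cauchySchwarz
  nlinarith

def FormCauchy (A : E →ₗ.[ℂ] E) (s : ℕ → A.domain) : Prop :=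
  ∀ δ : ℝ, 0 < δ → ∃ N, ∀ n ≥ N, ∀ m ≥ N, (⟪((s n - s m : A.domain) : E), A (s n - s m)⟫).im < δ

theorem formCauchy_const (A : E →ₗ.[ℂ] E) (x : A.domain) : A.FormCauchy fun _ => x :=
  fun δ hδ => ⟨0, fun n _ m _ => by simpa using hδ⟩

theorem im_inner_apply_eq_norm_sq {A Q : E →ₗ.[ℂ] E}
    (hQ : ∀ (f : Q.domain) (s : ℕ → A.domain), Tendsto (fun n => (s n : E)) atTop (𝓝 (f : E)) →
      A.FormCauchy s → Tendsto (fun n => (⟪(s n : E), A (s n)⟫).im) atTop (𝓝 (‖Q f‖ ^ 2)))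
    (f : Q.domain) (x : A.domain) (hxf : (x : E) = f) : (⟪(x : E), A x⟫).im = ‖Q f‖ ^ 2 :=
  tendsto_nhds_unique tendsto_const_nhds
    (hQ f (fun _ => x) (hxf ▸ tendsto_const_nhds) (A.formCauchy_const x))

theorem isSymmetric_of_leftInverse {Q : E →ₗ.[ℂ] E}
    (hQ : ∀ f g : Q.domain, ⟪Q f, (g : E)⟫ = ⟪(f : E), Q g⟫) (hQsurj : Function.Surjective Q)
    {R : E →ₗ[ℂ] E} (hRQ : ∀ f : Q.domain, R (Q f) = f) : R.IsSymmetric := by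
  intro x y
  obtain ⟨f, rfl⟩ := hQsurj x
  obtain ⟨g, rfl⟩ := hQsurj y
  rw [hRQ, hRQ, hQ]

theorem exists_inner_eq_and_norm_sub_sq_le [CompleteSpace E] {A B : E →ₗ.[ℂ] E} (hAB : A ≤ B)
    (hB : ∀ f : B.domain, 0 ≤ (⟪(f : E), B f⟫).im) {R : E →L[ℂ] E}
    (hR : (R : E →ₗ[ℂ] E).IsSymmetric)
    (hRA : ∀ (g : E) (hg : R g ∈ A.domain), (⟪R g, A ⟨R g, hg⟩⟫).im = ‖g‖ ^ 2) (v : B.domain) :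
    ∃ w : E, (∀ (g : E) (hg : R g ∈ A.domain), ⟪(v : E), A ⟨R g, hg⟩⟫ = ⟪w, g⟫) ∧
      (1 / 4 : ℝ) * ‖R (B v) - w‖ ^ 2 ≤ (⟪(v : E), B v⟫).im := by
  set β := (⟪(v : E), B v⟫).im
  have hβ : 0 ≤ β := hB v
  let M := A.domain.comap (R : E →ₗ[ℂ] E)
  let φ : M →ₗ[ℂ] ℂ :=
    innerₛₗ ℂ (v : E) ∘ₗ A.toFun ∘ₗ (R : E →ₗ[ℂ] E).restrict (fun _ hx => hx) -
      innerₛₗ ℂ (R (B v)) ∘ₗ M.subtype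
  have hRsymm : ∀ x y : E, ⟪R x, y⟫ = ⟪x, R y⟫ := hR
  have hφ_apply : ∀ g : M, φ g = ⟪(v : E), A ⟨R g, g.2⟩⟫ - ⟪R (B v), (g : E)⟫ := fun _ => rfl
  have hφ : ∀ g : M, ‖φ g‖ ≤ 2 * √β * ‖g‖ := by
    intro g
    let x : B.domain := ⟨R g, hAB.1 g.2⟩
    have hBx : B x = A ⟨R g, g.2⟩ := (hAB.2 rfl).symm
    have hsq : ‖φ g‖ ^ 2 ≤ (2 * √β * ‖g‖) ^ 2 := by
      rw [mul_pow, mul_pow, Real.sq_sqrt hβ, Submodule.coe_norm, ← hRA g g.2, hφ_apply,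
        ← hBx, hRsymm (B v) g]
      linarith [B.norm_inner_sub_inner_sq_le hB v x]
    exact abs_le_of_sq_le_sq' hsq (by positivity) |>.2
  obtain ⟨z, hz, hzφ⟩ := exists_norm_le_forall_inner_eq φ (by positivity) hφ
  refine ⟨z + R (B v), fun g hg => ?_, ?_⟩
  · rw [inner_add_left, hzφ ⟨g, hg⟩, hφ_apply, sub_add_cancel]
  · have hz_sq : ‖z‖ ^ 2 ≤ 4 * β :=
      calc ‖z‖ ^ 2 ≤ (2 * √β) ^ 2 := by gcongr
        _ = 4 * β := by rw [mul_pow, Real.sq_sqrt hβ]; norm_num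
    rw [sub_add_cancel_right, norm_neg]
    linarith

end LinearPMap

/-- `Q` encodes `V_A^{1/2}` through the closure of the form `Im ⟪f, A f⟫` (`hQval`), `R` is
`V_A^{-1/2}`, and `w` is `W_A^* v`, where `W_A g = A (R g)` on `{g | R g ∈ D(A)}`. -/
theorem stmt_6_general {E : Type*} [NormedAddCommGroup E] [InnerProductSpace ℂ E] [CompleteSpace E]
    (A : E →ₗ.[ℂ] E)
    (Q : E →ₗ.[ℂ] E)
    (hQsym : ∀ f g : Q.domain, ⟪Q f, (g : E)⟫ = ⟪(f : E), Q g⟫)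
    (hQval : ∀ (f : Q.domain) (s : ℕ → A.domain),
      Tendsto (fun n => ((s n : E))) atTop (𝓝 (f : E)) →
      (∀ δ : ℝ, 0 < δ → ∃ N, ∀ n ≥ N, ∀ m ≥ N,
        (⟪((s n - s m : A.domain) : E), A (s n - s m)⟫).im < δ) →
      Tendsto (fun n => (⟪((s n : E)), A (s n)⟫).im) atTop (𝓝 (‖Q f‖ ^ 2)))
    (R : E →L[ℂ] E)
    (hRQ : ∀ f : Q.domain, R (Q f) = (f : E))
    (hQsurj : ∀ g : E, ∃ f : Q.domain, Q f = g)
    (B : E →ₗ.[ℂ] E) (hAB : A ≤ B)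
    (hBdiss : ∀ f : B.domain, 0 ≤ (⟪(f : E), B f⟫).im)
    (𝒱 : Submodule ℂ E) (h𝒱B : 𝒱 ≤ B.domain) :
    ∀ (v : E) (hv : v ∈ 𝒱), ∃ w : E,
      (∀ (g : E) (hg : R g ∈ A.domain), ⟪v, A ⟨R g, hg⟩⟫ = ⟪w, g⟫) ∧
      (1 / 4 : ℝ) * ‖R (B ⟨v, h𝒱B hv⟩) - w‖ ^ 2 ≤ (⟪v, B ⟨v, h𝒱B hv⟩⟫).im := by
  intro v hv
  have hR : (R : E →ₗ[ℂ] E).IsSymmetric := LinearPMap.isSymmetric_of_leftInverse hQsym hQsurj hRQ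
  have hRA : ∀ (g : E) (hg : R g ∈ A.domain), (⟪R g, A ⟨R g, hg⟩⟫).im = ‖g‖ ^ 2 := by
    intro g hg
    obtain ⟨f, rfl⟩ := hQsurj g
    exact LinearPMap.im_inner_apply_eq_norm_sq hQval f ⟨R (Q f), hg⟩ (hRQ f)
  exact LinearPMap.exists_inner_eq_and_norm_sub_sq_le hAB hBdiss hR hRA ⟨v, h𝒱B hv⟩

/-- **Main theorem, necessity direction.**
Let `A` be a dissipative operator on a complex Hilbert space `E` whose form
`q_A(f) = Im ⟪f, A f⟫` is closable with `q_A(f) ≥ ε ‖f‖²` for some `ε > 0`, let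
`Q = V_A^{1/2}` be the square root of the selfadjoint operator `V_A` associated with the
closure of `q_A` (encoded as in the hypotheses `hQsym, hQpos, hQdom, hQval`), and let
`R = V_A^{-1/2}` be its bounded inverse.  The operator `W_A` has domain
`ran (V_A^{1/2} ↾ D(A)) = {g : R g ∈ D(A)}` and acts by `W_A g = A V_A^{-1/2} g`.
If `B ⊇ A` is a dissipative extension with `D(B) = D(A) ∔ 𝒱`, then every `v ∈ 𝒱` belongs
to `D(W_A^*)` — i.e. there is `w = W_A^* v` with `⟪v, A (R g)⟫ = ⟪w, g⟫` whenever
`R g ∈ D(A)` — and satisfies `Im ⟪v, B v⟫ ≥ (1/4) ‖(V_A^{-1/2} B - W_A^*) v‖²`. -/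
theorem stmt_6 {E : Type*} [NormedAddCommGroup E] [InnerProductSpace ℂ E] [CompleteSpace E]
    (A : E →ₗ.[ℂ] E) (hdense : Dense (A.domain : Set E))
    (hdiss : ∀ f : A.domain, 0 ≤ (⟪(f : E), A f⟫).im)
    (ε : ℝ) (hε : 0 < ε)
    (hpos : ∀ f : A.domain, ε * ‖(f : E)‖ ^ 2 ≤ (⟪(f : E), A f⟫).im)
    (Q : E →ₗ.[ℂ] E)
    (hQsym : ∀ f g : Q.domain, ⟪Q f, (g : E)⟫ = ⟪(f : E), Q g⟫)
    (hQpos : ∀ f : Q.domain, 0 ≤ (⟪(f : E), Q f⟫).re)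
    (hQdom : ∀ f : E, f ∈ Q.domain ↔ ∃ s : ℕ → A.domain,
      Tendsto (fun n => ((s n : E))) atTop (𝓝 f) ∧
      ∀ δ : ℝ, 0 < δ → ∃ N, ∀ n ≥ N, ∀ m ≥ N,
        (⟪((s n - s m : A.domain) : E), A (s n - s m)⟫).im < δ)
    (hQval : ∀ (f : Q.domain) (s : ℕ → A.domain),
      Tendsto (fun n => ((s n : E))) atTop (𝓝 (f : E)) →
      (∀ δ : ℝ, 0 < δ → ∃ N, ∀ n ≥ N, ∀ m ≥ N,
        (⟪((s n - s m : A.domain) : E), A (s n - s m)⟫).im < δ) →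
      Tendsto (fun n => (⟪((s n : E)), A (s n)⟫).im) atTop (𝓝 (‖Q f‖ ^ 2)))
    (R : E →L[ℂ] E)
    (hRQ : ∀ f : Q.domain, R (Q f) = (f : E))
    (hQsurj : ∀ g : E, ∃ f : Q.domain, Q f = g)
    (B : E →ₗ.[ℂ] E) (hAB : A ≤ B)
    (hBdiss : ∀ f : B.domain, 0 ≤ (⟪(f : E), B f⟫).im)
    (𝒱 : Submodule ℂ E) (h𝒱B : 𝒱 ≤ B.domain)
    (hdisj : A.domain ⊓ 𝒱 = ⊥) (hsum : A.domain ⊔ 𝒱 = B.domain) :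
    ∀ (v : E) (hv : v ∈ 𝒱), ∃ w : E,
      (∀ (g : E) (hg : R g ∈ A.domain), ⟪v, A ⟨R g, hg⟩⟫ = ⟪w, g⟫) ∧
      (1 / 4 : ℝ) * ‖R (B ⟨v, h𝒱B hv⟩) - w‖ ^ 2 ≤ (⟪v, B ⟨v, h𝒱B hv⟩⟫).im :=
  stmt_6_general A Q hQsym hQval R hRQ hQsurj B hAB hBdiss 𝒱 h𝒱B
end

section
/- Let S be a strictly positive symmetric operator with Friedrichs extension S_F and Kreĭn–von Neumann extension S_K. Then D(S_K^{1/2}) = D(S_F^{1/2}) ∔ ker(S*) (direct sum), and for every f ∈ D(S_F^{1/2}) and v ∈ ker(S*): ‖S_K^{1/2}(f+v)‖² = ‖S_F^{1/2} f‖². -/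
open Filter Topology

local notation "⟪" x ", " y "⟫" => @inner ℂ _ _ x y

/-- The kernel of the adjoint `S*` of a densely defined operator `S`, described without
reference to the adjoint as `{v : ∀ f ∈ D(S), ⟪v, S f⟫ = 0}` (which says precisely that
`v ∈ D(S*)` and `S* v = 0`). -/
def kerAdjoint {E : Type*} [NormedAddCommGroup E] [InnerProductSpace ℂ E]
    (S : E →ₗ.[ℂ] E) : Submodule ℂ E where
  carrier := {v | ∀ f : S.domain, ⟪v, S f⟫ = (0 : ℂ)}
  add_mem' := by
    intro a b ha hb f
    simp [inner_add_left, ha f, hb f]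
  zero_mem' := by
    intro f
    simp
  smul_mem' := by
    intro c v hv f
    simp [inner_smul_left, hv f]

/-!
Write `κ` for the restriction of `QK` to `D(S)`. Since `QK² = SK` extends `S`,
`⟪κ u, κ u'⟫ = ⟪u, S u'⟫`, so the form norm of `S` is `u ↦ ‖κ u‖` and `D(S_F^{1/2})` consists of
the limits `g` of sequences `u n` along which `κ (u n)` converges to some `m`; then
`‖S_F^{1/2} g‖ = ‖m‖` and `⟪g, S u⟫ = ⟪m, κ u⟫`. `QK` vanishes on `ker S*`, since there
`‖QK v‖² = ⟪v, SK v⟫ = 0`, so its range is orthogonal to `ker S*`. Strict positivity makes the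
range of `S̄` closed, so each `m ⊥ ker S*` is `SK w`, and `x = QK w` has `QK x = m` and
`g - x ∈ ker S*`. Conversely `κ (D(S))` is dense in `(ker S*)ᗮ`: if `SK w ⊥ κ (D(S))` then
`⟪QK w, S u⟫ = ⟪SK w, κ u⟫ = 0`, so `QK w ∈ ker S*` and `SK w = QK (QK w) = 0`. Hence every `QK f`
is such an `m`, and `f` differs from the corresponding `g` by an element of `ker S*`.
-/

theorem cauchySeq_of_cauchySeq_comp {G F : Type*} [SeminormedAddCommGroup G]
    [SeminormedAddCommGroup F] (f : G →+ F) {c : ℝ} (hc : 0 < c) (hf : ∀ x, c * ‖x‖ ≤ ‖f x‖)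
    {u : ℕ → G} (hu : CauchySeq (f ∘ u)) : CauchySeq u := by
  rw [Metric.cauchySeq_iff] at hu ⊢
  intro δ hδ
  obtain ⟨N, hN⟩ := hu (c * δ) (mul_pos hc hδ)
  refine ⟨N, fun m hm n hn => ?_⟩
  have h := hN m hm n hn
  rw [Function.comp_apply, Function.comp_apply, dist_eq_norm, ← map_sub] at h
  rw [dist_eq_norm]
  exact lt_of_mul_lt_mul_left ((hf _).trans_lt h) hc.le

theorem Metric.cauchySeq_iff_dist_sq {α : Type*} [PseudoMetricSpace α] {u : ℕ → α} :
    CauchySeq u ↔ ∀ δ > 0, ∃ N, ∀ m ≥ N, ∀ n ≥ N, dist (u m) (u n) ^ 2 < δ := by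
  rw [Metric.cauchySeq_iff]
  constructor
  · intro h δ hδ
    obtain ⟨N, hN⟩ := h (√δ) (Real.sqrt_pos.2 hδ)
    exact ⟨N, fun m hm n hn => (Real.lt_sqrt dist_nonneg).1 (hN m hm n hn)⟩
  · intro h δ hδ
    obtain ⟨N, hN⟩ := h (δ ^ 2) (by positivity)
    exact ⟨N, fun m hm n hn =>
      (pow_lt_pow_iff_left₀ dist_nonneg hδ.le two_ne_zero).1 (hN m hm n hn)⟩

theorem mul_norm_le_norm_of_mul_norm_sq_le_re_inner {𝕜 E : Type*} [RCLike 𝕜]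
    [NormedAddCommGroup E] [InnerProductSpace 𝕜 E] {x y : E} {c : ℝ}
    (h : c * ‖x‖ ^ 2 ≤ RCLike.re (inner 𝕜 x y)) : c * ‖x‖ ≤ ‖y‖ := by
  rcases (norm_nonneg x).eq_or_lt with hx | hx
  · rw [← hx, mul_zero]
    exact norm_nonneg y
  · refine le_of_mul_le_mul_right ?_ hx
    nlinarith [re_inner_le_norm (𝕜 := 𝕜) x y]

namespace LinearPMap

variable {𝕜 E F : Type*} [NormedField 𝕜] [NormedAddCommGroup E] [NormedSpace 𝕜 E]
  [CompleteSpace E] [NormedAddCommGroup F] [NormedSpace 𝕜 F]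

theorem IsClosable.exists_closure_apply_eq {T : E →ₗ.[𝕜] F} (hT : T.IsClosable) {c : ℝ}
    (hc : 0 < c) (hbound : ∀ x : T.domain, c * ‖(x : E)‖ ≤ ‖T x‖) {z : F}
    (hz : z ∈ _root_.closure (LinearMap.range T.toFun : Set F)) :
    ∃ w : T.closure.domain, T.closure w = z := by
  obtain ⟨u, hu, hlim⟩ := mem_closure_iff_seq_limit.1 hz
  choose t ht using hu
  obtain rfl : u = fun n => T (t n) := funext fun n => (ht n).symm
  obtain ⟨w, hw⟩ := cauchySeq_tendsto_of_complete <| uniformContinuous_subtype_val.comp_cauchySeq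
    (cauchySeq_of_cauchySeq_comp T.toFun.toAddMonoidHom hc hbound hlim.cauchySeq)
  have hgraph : (w, z) ∈ T.closure.graph := by
    rw [← hT.graph_closure_eq_closure_graph, ← SetLike.mem_coe,
      Submodule.topologicalClosure_coe]
    exact mem_closure_of_tendsto (hw.prodMk_nhds hlim)
      (Eventually.of_forall fun n => T.mem_graph (t n))
  obtain ⟨a, -, ha⟩ := T.closure.mem_graph_iff.1 hgraph
  exact ⟨a, ha⟩

end LinearPMap

section Adjoint

variable {E : Type*} [NormedAddCommGroup E] [InnerProductSpace ℂ E] {S T : E →ₗ.[ℂ] E}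

theorem kerAdjoint_eq_orthogonal_range (S : E →ₗ.[ℂ] E) :
    kerAdjoint S = (LinearMap.range S.toFun)ᗮ := by
  ext v
  rw [Submodule.mem_orthogonal']
  exact ⟨fun hv _ ⟨f, hf⟩ => hf ▸ hv f, fun hv f => hv _ ⟨f, rfl⟩⟩

variable [CompleteSpace E]

theorem orthogonal_kerAdjoint (S : E →ₗ.[ℂ] E) :
    (kerAdjoint S)ᗮ = (LinearMap.range S.toFun).topologicalClosure := by
  rw [kerAdjoint_eq_orthogonal_range, Submodule.orthogonal_orthogonal_eq_closure]

theorem LinearPMap.isClosable_of_symm (hdense : Dense (S.domain : Set E))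
    (hsym : ∀ f g : S.domain, ⟪S f, (g : E)⟫ = ⟪(f : E), S g⟫) : S.IsClosable :=
  (adjoint_isClosed hdense).isClosable.leIsClosable (IsFormalAdjoint.le_adjoint hdense hsym)

theorem LinearPMap.closure_le_adjoint_of_symm (hdense : Dense (S.domain : Set E))
    (hsym : ∀ f g : S.domain, ⟪S f, (g : E)⟫ = ⟪(f : E), S g⟫) : S.closure ≤ S.adjoint := by
  refine le_of_le_graph ?_
  rw [← (isClosable_of_symm hdense hsym).graph_closure_eq_closure_graph]
  exact Submodule.topologicalClosure_minimal _
    (le_graph_of_le (IsFormalAdjoint.le_adjoint hdense hsym)) (adjoint_isClosed hdense)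

theorem LinearPMap.apply_eq_of_le_adjoint (hdense : Dense (S.domain : Set E))
    (hT : T ≤ S.adjoint) (x : T.domain) {y : E}
    (hy : ∀ s : S.domain, ⟪y, (s : E)⟫ = ⟪(x : E), S s⟫) : T x = y :=
  (hT.2 rfl).trans (adjoint_apply_eq hdense ⟨x, hT.1 x.2⟩ hy)

theorem LinearPMap.apply_eq_zero_of_le_adjoint (hdense : Dense (S.domain : Set E))
    (hT : T ≤ S.adjoint) (x : T.domain) (hx : (x : E) ∈ kerAdjoint S) : T x = 0 :=
  apply_eq_of_le_adjoint hdense hT x fun s => by rw [inner_zero_left, hx s]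

theorem LinearPMap.apply_eq_of_le_adjoint_of_symm (hdense : Dense (S.domain : Set E))
    (hsym : ∀ f g : S.domain, ⟪S f, (g : E)⟫ = ⟪(f : E), S g⟫) (hT : T ≤ S.adjoint)
    (x : T.domain) (hx : (x : E) ∈ S.domain) : T x = S ⟨x, hx⟩ :=
  apply_eq_of_le_adjoint hdense hT x fun s => hsym ⟨x, hx⟩ s

theorem exists_apply_eq_of_mem_orthogonal_kerAdjoint (hdense : Dense (S.domain : Set E))
    (hsym : ∀ f g : S.domain, ⟪S f, (g : E)⟫ = ⟪(f : E), S g⟫) {ε : ℝ} (hε : 0 < ε)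
    (hpos : ∀ f : S.domain, ε * ‖(f : E)‖ ^ 2 ≤ (⟪(f : E), S f⟫).re)
    (hT : T ≤ S.adjoint) (hTdom : S.closure.domain ≤ T.domain) {z : E}
    (hz : z ∈ (kerAdjoint S)ᗮ) : ∃ w : T.domain, T w = z := by
  rw [orthogonal_kerAdjoint, ← SetLike.mem_coe, Submodule.topologicalClosure_coe] at hz
  obtain ⟨w, rfl⟩ := (LinearPMap.isClosable_of_symm hdense hsym).exists_closure_apply_eq hε
    (fun f => mul_norm_le_norm_of_mul_norm_sq_le_re_inner (𝕜 := ℂ) (hpos f)) hz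
  have hadj : S.closure w = S.adjoint ⟨w, hT.1 (hTdom w.2)⟩ :=
    (LinearPMap.closure_le_adjoint_of_symm hdense hsym).2 rfl
  exact ⟨⟨w, hTdom w.2⟩, (hT.2 rfl).trans hadj.symm⟩

end Adjoint

section Sqrt

variable {E : Type*} [NormedAddCommGroup E] [InnerProductSpace ℂ E]

structure LinearPMap.IsSymmetricSqrt (Q T : E →ₗ.[ℂ] E) : Prop where
  symm : ∀ f g : Q.domain, ⟪Q f, (g : E)⟫ = ⟪(f : E), Q g⟫
  mem_domain_iff : ∀ f : E, f ∈ T.domain ↔ ∃ hf : f ∈ Q.domain, Q ⟨f, hf⟩ ∈ Q.domain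
  apply_eq : ∀ (f : E) (hf : f ∈ Q.domain) (hf2 : Q ⟨f, hf⟩ ∈ Q.domain) (hfT : f ∈ T.domain),
    T ⟨f, hfT⟩ = Q ⟨Q ⟨f, hf⟩, hf2⟩

namespace LinearPMap.IsSymmetricSqrt

variable {Q T : E →ₗ.[ℂ] E} (h : Q.IsSymmetricSqrt T)
include h

theorem domain_le : T.domain ≤ Q.domain := fun f hf => ((h.mem_domain_iff f).1 hf).1

theorem apply_mem_domain (x : T.domain) : Q ⟨x, h.domain_le x.2⟩ ∈ Q.domain :=
  ((h.mem_domain_iff x).1 x.2).2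

theorem apply_apply (x : T.domain) : Q ⟨Q ⟨x, h.domain_le x.2⟩, h.apply_mem_domain x⟩ = T x :=
  (h.apply_eq _ _ _ x.2).symm

theorem inner_apply_apply (f : Q.domain) (x : T.domain) :
    ⟪Q f, Q ⟨x, h.domain_le x.2⟩⟫ = ⟪(f : E), T x⟫ := by
  rw [h.symm f ⟨_, h.apply_mem_domain x⟩, h.apply_apply]

theorem apply_eq_zero_of_apply_eq_zero (x : T.domain) (hx : T x = 0) :
    Q ⟨x, h.domain_le x.2⟩ = 0 :=
  inner_self_eq_zero.1 (by rw [h.inner_apply_apply, hx, inner_zero_right])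

end LinearPMap.IsSymmetricSqrt

end Sqrt

section Form

variable {E : Type*} [NormedAddCommGroup E] [InnerProductSpace ℂ E] {S : E →ₗ.[ℂ] E}

def IsFormCauchy (S : E →ₗ.[ℂ] E) (s : ℕ → S.domain) : Prop :=
  ∀ δ : ℝ, 0 < δ → ∃ N, ∀ n ≥ N, ∀ m ≥ N, (⟪((s n - s m : S.domain) : E), S (s n - s m)⟫).re < δ

theorem isFormCauchy_iff_cauchySeq {κ : S.domain →ₗ[ℂ] E}
    (hκ : ∀ f : S.domain, ‖κ f‖ ^ 2 = (⟪(f : E), S f⟫).re) {s : ℕ → S.domain} :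
    IsFormCauchy S s ↔ CauchySeq (κ ∘ s) := by
  simp only [IsFormCauchy, Metric.cauchySeq_iff_dist_sq, Function.comp_apply, dist_eq_norm,
    ← map_sub, hκ]

theorem cauchySeq_of_cauchySeq_form {κ : S.domain →ₗ[ℂ] E}
    (hκ : ∀ f : S.domain, ‖κ f‖ ^ 2 = (⟪(f : E), S f⟫).re) {ε : ℝ} (hε : 0 < ε)
    (hpos : ∀ f : S.domain, ε * ‖(f : E)‖ ^ 2 ≤ (⟪(f : E), S f⟫).re) {s : ℕ → S.domain}
    (hs : CauchySeq (κ ∘ s)) : CauchySeq (fun n => (s n : E)) := by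
  have hbound (f : S.domain) : √ε * ‖f‖ ≤ ‖κ f‖ := by
    refine (pow_le_pow_iff_left₀ (by positivity) (norm_nonneg _) two_ne_zero).1 ?_
    rw [mul_pow, Real.sq_sqrt hε.le, hκ]
    exact hpos f
  exact uniformContinuous_subtype_val.comp_cauchySeq
    (cauchySeq_of_cauchySeq_comp κ.toAddMonoidHom (Real.sqrt_pos.2 hε) hbound hs)

/-- `Q = S_F^{1/2}` for the Friedrichs extension `S_F` of `S`. -/
structure LinearPMap.IsFriedrichsSqrt (Q S : E →ₗ.[ℂ] E) : Prop where
  mem_domain_iff : ∀ f : E, f ∈ Q.domain ↔ ∃ s : ℕ → S.domain,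
    Tendsto (fun n => (s n : E)) atTop (𝓝 f) ∧ IsFormCauchy S s
  tendsto_form : ∀ (f : Q.domain) (s : ℕ → S.domain),
    Tendsto (fun n => (s n : E)) atTop (𝓝 (f : E)) → IsFormCauchy S s →
    Tendsto (fun n => (⟪(s n : E), S (s n)⟫).re) atTop (𝓝 (‖Q f‖ ^ 2))

namespace LinearPMap.IsFriedrichsSqrt

variable {Q : E →ₗ.[ℂ] E} (h : Q.IsFriedrichsSqrt S)
include h

theorem norm_sq_eq {κ : S.domain →ₗ[ℂ] E}
    (hκ : ∀ f : S.domain, ‖κ f‖ ^ 2 = (⟪(f : E), S f⟫).re) (f : Q.domain) {s : ℕ → S.domain}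
    {m : E} (hs : Tendsto (fun n => (s n : E)) atTop (𝓝 (f : E)))
    (hm : Tendsto (κ ∘ s) atTop (𝓝 m)) : ‖Q f‖ ^ 2 = ‖m‖ ^ 2 :=
  tendsto_nhds_unique (h.tendsto_form f s hs ((isFormCauchy_iff_cauchySeq hκ).2 hm.cauchySeq))
    (by simpa only [Function.comp_apply, hκ] using hm.norm.pow 2)

theorem mul_norm_sq_le {ε : ℝ} (hpos : ∀ f : S.domain, ε * ‖(f : E)‖ ^ 2 ≤ (⟪(f : E), S f⟫).re)
    (f : Q.domain) : ε * ‖(f : E)‖ ^ 2 ≤ ‖Q f‖ ^ 2 := by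
  obtain ⟨s, hs, hsC⟩ := (h.mem_domain_iff f).1 f.2
  exact le_of_tendsto_of_tendsto' ((hs.norm.pow 2).const_mul ε) (h.tendsto_form f s hs hsC)
    fun n => hpos (s n)

end LinearPMap.IsFriedrichsSqrt

end Form

namespace KreinVonNeumann

variable {E : Type*} [NormedAddCommGroup E] [InnerProductSpace ℂ E] {S SK QK : E →ₗ.[ℂ] E}

theorem domain_le_sqrt_domain (hSKdom : S.closure.domain ⊔ kerAdjoint S ≤ SK.domain)
    (hQK : QK.IsSymmetricSqrt SK) : S.domain ≤ QK.domain :=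
  fun _ hu => hQK.domain_le (hSKdom (Submodule.mem_sup_left (S.le_closure.1 hu)))

theorem kerAdjoint_le_sqrt_domain (hSKdom : S.closure.domain ⊔ kerAdjoint S ≤ SK.domain)
    (hQK : QK.IsSymmetricSqrt SK) : kerAdjoint S ≤ QK.domain :=
  fun _ hv => hQK.domain_le (hSKdom (Submodule.mem_sup_right hv))

variable [CompleteSpace E] (hdense : Dense (S.domain : Set E))
  (hSK : SK ≤ S.adjoint) (hSKdom : S.closure.domain ⊔ kerAdjoint S ≤ SK.domain)
  (hQK : QK.IsSymmetricSqrt SK)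

include hdense hSK hSKdom hQK

theorem apply_eq_zero_of_mem_kerAdjoint {v : E} (hv : v ∈ kerAdjoint S) :
    QK ⟨v, kerAdjoint_le_sqrt_domain hSKdom hQK hv⟩ = 0 :=
  hQK.apply_eq_zero_of_apply_eq_zero ⟨v, hSKdom (Submodule.mem_sup_right hv)⟩
    (LinearPMap.apply_eq_zero_of_le_adjoint hdense hSK _ hv)

theorem apply_mem_orthogonal_kerAdjoint (f : QK.domain) : QK f ∈ (kerAdjoint S)ᗮ :=
  fun v hv => by
    rw [← hQK.symm ⟨v, kerAdjoint_le_sqrt_domain hSKdom hQK hv⟩ f,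
      apply_eq_zero_of_mem_kerAdjoint hdense hSK hSKdom hQK hv, inner_zero_left]

variable (hsym : ∀ f g : S.domain, ⟪S f, (g : E)⟫ = ⟪(f : E), S g⟫)
include hsym

theorem inner_apply_eq (f : QK.domain) (u : S.domain) :
    ⟪(f : E), S u⟫ = ⟪QK f, QK ⟨u, domain_le_sqrt_domain hSKdom hQK u.2⟩⟫ := by
  rw [hQK.inner_apply_apply f ⟨u, hSKdom (Submodule.mem_sup_left (S.le_closure.1 u.2))⟩,
    LinearPMap.apply_eq_of_le_adjoint_of_symm hdense hsym hSK _ u.2]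

theorem norm_sq_apply_eq (u : S.domain) :
    ‖QK ⟨u, domain_le_sqrt_domain hSKdom hQK u.2⟩‖ ^ 2 = (⟪(u : E), S u⟫).re := by
  rw [inner_apply_eq hdense hSK hSKdom hQK hsym ⟨u, _⟩ u, ← RCLike.re_to_complex,
    inner_self_eq_norm_sq]

theorem inner_eq_of_tendsto {s : ℕ → S.domain} {g m : E}
    (hs : Tendsto (fun n => (s n : E)) atTop (𝓝 g))
    (hm : Tendsto (fun n => QK ⟨s n, domain_le_sqrt_domain hSKdom hQK (s n).2⟩) atTop (𝓝 m))
    (u : S.domain) : ⟪g, S u⟫ = ⟪m, QK ⟨u, domain_le_sqrt_domain hSKdom hQK u.2⟩⟫ :=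
  tendsto_nhds_unique (hs.inner tendsto_const_nhds)
    ((hm.inner tendsto_const_nhds).congr fun _ =>
      (inner_apply_eq hdense hSK hSKdom hQK hsym _ u).symm)

theorem apply_eq_zero_of_inner_eq_zero (w : SK.domain)
    (hw : ∀ u : S.domain, ⟪SK w, QK ⟨u, domain_le_sqrt_domain hSKdom hQK u.2⟩⟫ = 0) :
    SK w = 0 := by
  have hker : QK ⟨w, hQK.domain_le w.2⟩ ∈ kerAdjoint S := fun u => by
    rw [inner_apply_eq hdense hSK hSKdom hQK hsym ⟨_, hQK.apply_mem_domain w⟩ u,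
      hQK.apply_apply, hw]
  rw [← hQK.apply_apply w]
  exact apply_eq_zero_of_mem_kerAdjoint hdense hSK hSKdom hQK hker

variable {ε : ℝ} (hε : 0 < ε) (hpos : ∀ f : S.domain, ε * ‖(f : E)‖ ^ 2 ≤ (⟪(f : E), S f⟫).re)
include hε hpos

theorem topologicalClosure_range_eq :
    (LinearMap.range (QK.toFun ∘ₗ Submodule.inclusion (domain_le_sqrt_domain hSKdom hQK))
      ).topologicalClosure = (kerAdjoint S)ᗮ := by
  set M := (LinearMap.range (QK.toFun ∘ₗ Submodule.inclusion
    (domain_le_sqrt_domain hSKdom hQK))).topologicalClosure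
  have hM : M ≤ (kerAdjoint S)ᗮ := Submodule.topologicalClosure_minimal _
    (by rintro _ ⟨u, rfl⟩; exact apply_mem_orthogonal_kerAdjoint hdense hSK hSKdom hQK _)
    (Submodule.isClosed_orthogonal _)
  have : CompleteSpace M := (Submodule.isClosed_topologicalClosure _).completeSpace_coe
  have hbot : Mᗮ ⊓ (kerAdjoint S)ᗮ = ⊥ := by
    refine (Submodule.eq_bot_iff _).2 fun z ⟨hzM, hzK⟩ => ?_
    obtain ⟨w, rfl⟩ := exists_apply_eq_of_mem_orthogonal_kerAdjoint hdense hsym hε hpos hSK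
      (le_sup_left.trans hSKdom) hzK
    exact apply_eq_zero_of_inner_eq_zero hdense hSK hSKdom hQK hsym w fun u =>
      (Submodule.mem_orthogonal' _ _).1 hzM _ (Submodule.le_topologicalClosure _ ⟨u, rfl⟩)
  simpa only [hbot, sup_bot_eq] using Submodule.sup_orthogonal_inf_of_hasOrthogonalProjection hM

variable {QF : E →ₗ.[ℂ] E} (hQF : QF.IsFriedrichsSqrt S)
include hQF

theorem exists_sub_mem_kerAdjoint_of_mem_sqrt_domain (f : QK.domain) :
    ∃ g ∈ QF.domain, (f : E) - g ∈ kerAdjoint S := by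
  set κ := QK.toFun ∘ₗ Submodule.inclusion (domain_le_sqrt_domain hSKdom hQK)
  have hκ : ∀ u : S.domain, ‖κ u‖ ^ 2 = (⟪(u : E), S u⟫).re :=
    norm_sq_apply_eq hdense hSK hSKdom hQK hsym
  have hf : QK f ∈ closure (LinearMap.range κ : Set E) := by
    rw [← Submodule.topologicalClosure_coe, topologicalClosure_range_eq hdense hSK hSKdom hQK hsym
      hε hpos]
    exact apply_mem_orthogonal_kerAdjoint hdense hSK hSKdom hQK f
  obtain ⟨m, hm, hlim⟩ := mem_closure_iff_seq_limit.1 hf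
  choose s hs using hm
  obtain rfl : m = κ ∘ s := funext fun n => (hs n).symm
  obtain ⟨g, hg⟩ := cauchySeq_tendsto_of_complete
    (cauchySeq_of_cauchySeq_form hκ hε hpos hlim.cauchySeq)
  refine ⟨g, (hQF.mem_domain_iff g).2 ⟨s, hg, (isFormCauchy_iff_cauchySeq hκ).2 hlim.cauchySeq⟩,
    fun u => ?_⟩
  rw [inner_sub_left, inner_apply_eq hdense hSK hSKdom hQK hsym f u,
    inner_eq_of_tendsto hdense hSK hSKdom hQK hsym hg hlim u, sub_self]

theorem exists_sub_mem_kerAdjoint_of_mem_friedrichsSqrt_domain (g : QF.domain) :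
    ∃ x, ∃ hx : x ∈ QK.domain, (g : E) - x ∈ kerAdjoint S ∧ ‖QK ⟨x, hx⟩‖ ^ 2 = ‖QF g‖ ^ 2 := by
  set κ := QK.toFun ∘ₗ Submodule.inclusion (domain_le_sqrt_domain hSKdom hQK)
  have hκ : ∀ u : S.domain, ‖κ u‖ ^ 2 = (⟪(u : E), S u⟫).re :=
    norm_sq_apply_eq hdense hSK hSKdom hQK hsym
  obtain ⟨s, hs, hsC⟩ := (hQF.mem_domain_iff g).1 g.2
  obtain ⟨m, hm⟩ := cauchySeq_tendsto_of_complete ((isFormCauchy_iff_cauchySeq hκ).1 hsC)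
  have hmK : m ∈ (kerAdjoint S)ᗮ := (Submodule.isClosed_orthogonal _).mem_of_tendsto hm
    (Eventually.of_forall fun _ => apply_mem_orthogonal_kerAdjoint hdense hSK hSKdom hQK _)
  obtain ⟨w, hw⟩ := exists_apply_eq_of_mem_orthogonal_kerAdjoint hdense hsym hε hpos hSK
    (le_sup_left.trans hSKdom) hmK
  refine ⟨_, hQK.apply_mem_domain w, fun u => ?_, ?_⟩
  · rw [inner_sub_left, inner_eq_of_tendsto hdense hSK hSKdom hQK hsym hs hm u,
      inner_apply_eq hdense hSK hSKdom hQK hsym ⟨_, hQK.apply_mem_domain w⟩ u, hQK.apply_apply, hw,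
      sub_self]
  · rw [hQK.apply_apply, hw, hQF.norm_sq_eq hκ g hs hm]

theorem exists_norm_sq_apply_add_eq (g : QF.domain) {v : E} (hv : v ∈ kerAdjoint S) :
    ∃ h : (g : E) + v ∈ QK.domain, ‖QK ⟨_, h⟩‖ ^ 2 = ‖QF g‖ ^ 2 := by
  obtain ⟨x, hx, hgx, hnorm⟩ :=
    exists_sub_mem_kerAdjoint_of_mem_friedrichsSqrt_domain hdense hSK hSKdom hQK hsym hε hpos hQF g
  have hker : (g : E) - x + v ∈ kerAdjoint S := add_mem hgx hv
  have hker' := kerAdjoint_le_sqrt_domain hSKdom hQK hker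
  have hsplit : (g : E) + v = x + ((g : E) - x + v) := by abel
  have hmem : (g : E) + v ∈ QK.domain := by
    rw [hsplit]
    exact add_mem hx hker'
  have hsum : (⟨_, hmem⟩ : QK.domain) = ⟨x, hx⟩ + ⟨_, hker'⟩ := Subtype.ext hsplit
  refine ⟨hmem, ?_⟩
  rw [hsum, QK.map_add, apply_eq_zero_of_mem_kerAdjoint hdense hSK hSKdom hQK hker, add_zero,
    hnorm]

theorem friedrichsSqrt_domain_inf_kerAdjoint_eq_bot : QF.domain ⊓ kerAdjoint S = ⊥ := by
  refine (Submodule.eq_bot_iff _).2 fun g ⟨hg, hgK⟩ => ?_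
  obtain ⟨x, hx, hgx, hnorm⟩ := exists_sub_mem_kerAdjoint_of_mem_friedrichsSqrt_domain hdense hSK
    hSKdom hQK hsym hε hpos hQF ⟨g, hg⟩
  have hxK : x ∈ kerAdjoint S := by simpa using sub_mem hgK hgx
  have hlow := hQF.mul_norm_sq_le hpos ⟨g, hg⟩
  rw [← hnorm, apply_eq_zero_of_mem_kerAdjoint hdense hSK hSKdom hQK hxK, norm_zero,
    zero_pow two_ne_zero] at hlow
  exact norm_eq_zero.1 (pow_eq_zero_iff two_ne_zero |>.1
    (le_antisymm (nonpos_of_mul_nonpos_right hlow hε) (sq_nonneg _)))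

end KreinVonNeumann

open KreinVonNeumann

theorem stmt_10_general {E : Type*} [NormedAddCommGroup E] [InnerProductSpace ℂ E] [CompleteSpace E]
    (S : E →ₗ.[ℂ] E) (hdense : Dense (S.domain : Set E))
    (hsym : ∀ f g : S.domain, ⟪S f, (g : E)⟫ = ⟪(f : E), S g⟫)
    (ε : ℝ) (hε : 0 < ε)
    (hpos : ∀ f : S.domain, ε * ‖(f : E)‖ ^ 2 ≤ (⟪(f : E), S f⟫).re)
    -- `QF = S_F^{1/2}`:
    (QF : E →ₗ.[ℂ] E)
    (hQFdom : ∀ f : E, f ∈ QF.domain ↔ ∃ s : ℕ → S.domain,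
      Tendsto (fun n => ((s n : E))) atTop (𝓝 f) ∧
      ∀ δ : ℝ, 0 < δ → ∃ N, ∀ n ≥ N, ∀ m ≥ N,
        (⟪((s n - s m : S.domain) : E), S (s n - s m)⟫).re < δ)
    (hQFval : ∀ (f : QF.domain) (s : ℕ → S.domain),
      Tendsto (fun n => ((s n : E))) atTop (𝓝 (f : E)) →
      (∀ δ : ℝ, 0 < δ → ∃ N, ∀ n ≥ N, ∀ m ≥ N,
        (⟪((s n - s m : S.domain) : E), S (s n - s m)⟫).re < δ) →
      Tendsto (fun n => (⟪((s n : E)), S (s n)⟫).re) atTop (𝓝 (‖QF f‖ ^ 2)))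
    -- `SK`, the Kreĭn–von Neumann extension:
    (SK : E →ₗ.[ℂ] E) (hSKle : SK ≤ S.adjoint)
    (hSKdom : SK.domain = S.closure.domain ⊔ kerAdjoint S)
    -- `QK = S_K^{1/2}`, the positive square root of `SK`:
    (QK : E →ₗ.[ℂ] E)
    (hQKsym : ∀ f g : QK.domain, ⟪QK f, (g : E)⟫ = ⟪(f : E), QK g⟫)
    (hQKsq : ∀ f : E, f ∈ SK.domain ↔ ∃ hf : f ∈ QK.domain, QK ⟨f, hf⟩ ∈ QK.domain)
    (hQKsqval : ∀ (f : E) (hf : f ∈ QK.domain) (hf2 : QK ⟨f, hf⟩ ∈ QK.domain)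
      (hfS : f ∈ SK.domain), SK ⟨f, hfS⟩ = QK ⟨QK ⟨f, hf⟩, hf2⟩) :
    (∀ f : E, f ∈ QK.domain ↔
        ∃ g ∈ QF.domain, ∃ v ∈ kerAdjoint S, f = g + v) ∧
      QF.domain ⊓ kerAdjoint S = ⊥ ∧
      ∀ (g : E) (hg : g ∈ QF.domain) (v : E) (hv : v ∈ kerAdjoint S)
        (hgv : g + v ∈ QK.domain),
        ‖QK ⟨g + v, hgv⟩‖ ^ 2 = ‖QF ⟨g, hg⟩‖ ^ 2 := by
  have hQK : QK.IsSymmetricSqrt SK := ⟨hQKsym, hQKsq, hQKsqval⟩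
  have hQF : QF.IsFriedrichsSqrt S := ⟨hQFdom, hQFval⟩
  have hdom : S.closure.domain ⊔ kerAdjoint S ≤ SK.domain := hSKdom.ge
  refine ⟨fun f => ⟨fun hf => ?_, ?_⟩,
    friedrichsSqrt_domain_inf_kerAdjoint_eq_bot hdense hSKle hdom hQK hsym hε hpos hQF, ?_⟩
  · obtain ⟨g, hg, hfg⟩ := exists_sub_mem_kerAdjoint_of_mem_sqrt_domain hdense hSKle hdom hQK hsym
      hε hpos hQF ⟨f, hf⟩
    exact ⟨g, hg, f - g, hfg, (add_sub_cancel g f).symm⟩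
  · rintro ⟨g, hg, v, hv, rfl⟩
    exact (exists_norm_sq_apply_add_eq hdense hSKle hdom hQK hsym hε hpos hQF ⟨g, hg⟩ hv).1
  · intro g hg v hv _
    exact (exists_norm_sq_apply_add_eq hdense hSKle hdom hQK hsym hε hpos hQF ⟨g, hg⟩ hv).2

/-- **Form domain of the Kreĭn–von Neumann extension.**
Let `S` be a strictly positive symmetric operator with Friedrichs extension `S_F` and
Kreĭn–von Neumann extension `S_K = S* ↾ (D(S̄) ∔ ker S*)`.  Here `QF = S_F^{1/2}` is encoded
as the symmetric nonnegative operator whose domain is the closure of the form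
`f ↦ Re ⟪f, S f⟫` with `‖QF f‖²` equal to the closed form (hypotheses `hQFdom, hQFval`),
`SK` is the restriction of `S*` to `D(S.closure) ⊔ ker S*`, and `QK = S_K^{1/2}` is its
positive square root (`hQKsq`, `hQKsqval`).  Then
`D(S_K^{1/2}) = D(S_F^{1/2}) ∔ ker S*` and
`‖S_K^{1/2} (f + v)‖² = ‖S_F^{1/2} f‖²` for all `f ∈ D(S_F^{1/2})`, `v ∈ ker S*`. -/
theorem stmt_10 {E : Type*} [NormedAddCommGroup E] [InnerProductSpace ℂ E] [CompleteSpace E]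
    (S : E →ₗ.[ℂ] E) (hdense : Dense (S.domain : Set E))
    (hsym : ∀ f g : S.domain, ⟪S f, (g : E)⟫ = ⟪(f : E), S g⟫)
    (ε : ℝ) (hε : 0 < ε)
    (hpos : ∀ f : S.domain, ε * ‖(f : E)‖ ^ 2 ≤ (⟪(f : E), S f⟫).re)
    -- `QF = S_F^{1/2}`:
    (QF : E →ₗ.[ℂ] E)
    (hQFsym : ∀ f g : QF.domain, ⟪QF f, (g : E)⟫ = ⟪(f : E), QF g⟫)
    (hQFpos : ∀ f : QF.domain, 0 ≤ (⟪(f : E), QF f⟫).re)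
    (hQFdom : ∀ f : E, f ∈ QF.domain ↔ ∃ s : ℕ → S.domain,
      Tendsto (fun n => ((s n : E))) atTop (𝓝 f) ∧
      ∀ δ : ℝ, 0 < δ → ∃ N, ∀ n ≥ N, ∀ m ≥ N,
        (⟪((s n - s m : S.domain) : E), S (s n - s m)⟫).re < δ)
    (hQFval : ∀ (f : QF.domain) (s : ℕ → S.domain),
      Tendsto (fun n => ((s n : E))) atTop (𝓝 (f : E)) →
      (∀ δ : ℝ, 0 < δ → ∃ N, ∀ n ≥ N, ∀ m ≥ N,
        (⟪((s n - s m : S.domain) : E), S (s n - s m)⟫).re < δ) →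
      Tendsto (fun n => (⟪((s n : E)), S (s n)⟫).re) atTop (𝓝 (‖QF f‖ ^ 2)))
    -- `SK`, the Kreĭn–von Neumann extension:
    (SK : E →ₗ.[ℂ] E) (hSKle : SK ≤ S.adjoint)
    (hSKdom : SK.domain = S.closure.domain ⊔ kerAdjoint S)
    -- `QK = S_K^{1/2}`, the positive square root of `SK`:
    (QK : E →ₗ.[ℂ] E)
    (hQKsym : ∀ f g : QK.domain, ⟪QK f, (g : E)⟫ = ⟪(f : E), QK g⟫)
    (hQKpos : ∀ f : QK.domain, 0 ≤ (⟪(f : E), QK f⟫).re)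
    (hQKsq : ∀ f : E, f ∈ SK.domain ↔ ∃ hf : f ∈ QK.domain, QK ⟨f, hf⟩ ∈ QK.domain)
    (hQKsqval : ∀ (f : E) (hf : f ∈ QK.domain) (hf2 : QK ⟨f, hf⟩ ∈ QK.domain)
      (hfS : f ∈ SK.domain), SK ⟨f, hfS⟩ = QK ⟨QK ⟨f, hf⟩, hf2⟩) :
    (∀ f : E, f ∈ QK.domain ↔
        ∃ g ∈ QF.domain, ∃ v ∈ kerAdjoint S, f = g + v) ∧
      QF.domain ⊓ kerAdjoint S = ⊥ ∧
      ∀ (g : E) (hg : g ∈ QF.domain) (v : E) (hv : v ∈ kerAdjoint S)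
        (hgv : g + v ∈ QK.domain),
        ‖QK ⟨g + v, hgv⟩‖ ^ 2 = ‖QF ⟨g, hg⟩‖ ^ 2 :=
  stmt_10_general S hdense hsym ε hε hpos QF hQFdom hQFval SK hSKle hSKdom QK hQKsym hQKsq hQKsqval
end

section
/- Let A be a closed dissipative operator on a separable Hilbert space with dim ker(A* - i) < ∞, and let Â be a dissipative extension of A. Then Â is maximally dissipative if and only if dim( D(Â)/D(A) ) = dim ker(A* - i). -/
open Filter Topology

local notation "⟪" x ", " y "⟫" => @inner ℂ _ _ x y

/-- For a densely defined operator `A`, the subspace `ker (A* - i)`, described without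
reference to the adjoint as `{v : ∀ f ∈ D(A), ⟪v, A f⟫ = ⟪i v, f⟫}` (which says precisely
that `v ∈ D(A*)` and `A* v = i v`). -/
def eigKer {E : Type*} [NormedAddCommGroup E] [InnerProductSpace ℂ E]
    (A : E →ₗ.[ℂ] E) : Submodule ℂ E where
  carrier := {v | ∀ f : A.domain, ⟪v, A f⟫ = ⟪Complex.I • v, (f : E)⟫}
  add_mem' := by
    intro a b ha hb f
    simp only [smul_add, inner_add_left, ha f, hb f]
  zero_mem' := by
    intro f
    simp
  smul_mem' := by
    intro c v hv f
    rw [smul_comm]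
    simp only [inner_smul_left, hv f]

/-! For a dissipative operator `X` one has `‖(X + i) f‖ ≥ ‖f‖`, so `X + i` is injective on `D(X)`,
and its range is closed when `X` is closed; `ker (X* - i)` is the orthogonal complement of that
range. Hence `E = ran (A + i) ⊕ ker (A* - i)`, and `B + i` identifies `D(B) / D(A)` with
`ran (B + i) / ran (A + i) ≅ ker (A* - i) ⊓ ran (B + i)`. If `ran (B + i) = E`, injectivity of
`C + i` forbids proper dissipative extensions `C`; otherwise some `v ≠ 0` is orthogonal to
`ran (B + i)`, i.e. `B* v = i v`, and extending `B` by `v ↦ i v` stays dissipative. As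
`ker (A* - i)` is finite-dimensional, `ran (B + i) = E` holds exactly when the dimensions agree. -/

theorem IsCompl.sup_inf_of_le {α : Type*} [Lattice α] [BoundedOrder α] [IsModularLattice α]
    {a b c : α} (h : IsCompl a b) (hac : a ≤ c) : a ⊔ b ⊓ c = c := by
  rw [← sup_inf_assoc_of_le b hac, h.sup_eq_top, top_inf_eq]

namespace Submodule

theorem rank_quotient_comap_subtype_eq_rank_inf {R M : Type*} [Ring R] [AddCommGroup M]
    [Module R M] {p q s : Submodule R M} (h : IsCompl p q) (hps : p ≤ s) :
    Module.rank R (s ⧸ p.comap s.subtype) = Module.rank R (q ⊓ s : Submodule R M) := by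
  have e := LinearMap.quotientInfEquivSupQuotient (q ⊓ s) p
  have hbot : q ⊓ s ⊓ p = ⊥ := disjoint_iff.mp (h.disjoint.symm.mono_left inf_le_left)
  rw [sup_comm, h.sup_inf_of_le hps, ← comap_inf, hbot, comap_bot, ker_subtype] at e
  rw [← e.rank_eq, (quotEquivOfEqBot ⊥ rfl).rank_eq]

theorem rank_eq_rank_iff_of_le {K V : Type*} [DivisionRing K] [AddCommGroup V] [Module K V]
    {p q : Submodule K V} [FiniteDimensional K q] (h : p ≤ q) :
    Module.rank K p = Module.rank K q ↔ p = q :=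
  ⟨fun hr => eq_of_le_of_finrank_eq h (congrArg Cardinal.toNat hr), fun hpq => hpq ▸ rfl⟩

end Submodule

namespace LinearPMap

variable {E : Type*} [NormedAddCommGroup E] [InnerProductSpace ℂ E]

def Dissipative (X : E →ₗ.[ℂ] E) : Prop := ∀ f : X.domain, 0 ≤ (⟪(f : E), X f⟫).im

noncomputable def addI (X : E →ₗ.[ℂ] E) : X.domain →ₗ[ℂ] E :=
  X.toFun + Complex.I • X.domain.subtype

theorem addI_apply (X : E →ₗ.[ℂ] E) (f : X.domain) : X.addI f = X f + Complex.I • (f : E) :=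
  rfl

noncomputable def rangeAddI (X : E →ₗ.[ℂ] E) : Submodule ℂ E := LinearMap.range X.addI

theorem mem_rangeAddI {X : E →ₗ.[ℂ] E} {x : E} :
    x ∈ X.rangeAddI ↔ ∃ f : X.domain, X f + Complex.I • (f : E) = x :=
  Iff.rfl

theorem addI_inclusion {A B : E →ₗ.[ℂ] E} (hAB : A ≤ B) (f : A.domain) :
    B.addI (Submodule.inclusion hAB.1 f) = A.addI f := by
  rw [addI_apply, addI_apply, ← apply_comp_inclusion hAB]
  rfl

theorem rangeAddI_mono {A B : E →ₗ.[ℂ] E} (hAB : A ≤ B) : A.rangeAddI ≤ B.rangeAddI := by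
  rintro _ ⟨f, rfl⟩
  exact ⟨_, addI_inclusion hAB f⟩

theorem norm_addI_sq (X : E →ₗ.[ℂ] E) (f : X.domain) :
    ‖X.addI f‖ ^ 2 = ‖X f‖ ^ 2 + ‖(f : E)‖ ^ 2 + 2 * (⟪(f : E), X f⟫).im := by
  have h : RCLike.re ⟪X f, Complex.I • (f : E)⟫ = (⟪(f : E), X f⟫).im := by
    rw [inner_smul_right, ← inner_conj_symm (X f)]
    simp only [RCLike.re_to_complex, Complex.mul_re, Complex.I_re, Complex.I_im, Complex.conj_re,
      Complex.conj_im]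
    ring
  rw [addI_apply, @norm_add_sq ℂ, norm_smul, Complex.norm_I, one_mul, h]
  ring

theorem eigKer_eq_orthogonal_rangeAddI (X : E →ₗ.[ℂ] E) : eigKer X = X.rangeAddIᗮ := by
  ext v
  have key (f : X.domain) :
      ⟪X f + Complex.I • (f : E), v⟫ = 0 ↔ ⟪v, X f⟫ = ⟪Complex.I • v, (f : E)⟫ := by
    rw [← inner_conj_symm, map_eq_zero, inner_add_right, inner_smul_right, inner_smul_left,
      Complex.conj_I, neg_mul, add_eq_zero_iff_eq_neg]
  simp only [Submodule.mem_orthogonal, mem_rangeAddI, forall_exists_index,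
    forall_apply_eq_imp_iff, key]
  rfl

namespace Dissipative

variable {X : E →ₗ.[ℂ] E} (hX : X.Dissipative)
include hX

theorem norm_le_norm_addI (f : X.domain) : ‖(f : E)‖ ≤ ‖X.addI f‖ := by
  nlinarith [X.norm_addI_sq f, hX f, norm_nonneg (X.addI f), norm_nonneg (f : E)]

theorem norm_apply_le_norm_addI (f : X.domain) : ‖X f‖ ≤ ‖X.addI f‖ := by
  nlinarith [X.norm_addI_sq f, hX f, norm_nonneg (X.addI f), norm_nonneg (X f)]

theorem injective_addI : Function.Injective X.addI := by
  refine (injective_iff_map_eq_zero _).2 fun f hf => ?_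
  simpa [hf] using hX.norm_le_norm_addI f

theorem isClosed_rangeAddI [CompleteSpace E] (hc : X.IsClosed) :
    _root_.IsClosed (X.rangeAddI : Set E) := by
  have : CompleteSpace X.graph := hc.completeSpace_coe
  let L : X.graph →L[ℂ] E :=
    (ContinuousLinearMap.snd ℂ E E + Complex.I • ContinuousLinearMap.fst ℂ E E).comp
      X.graph.subtypeL
  have hL (f : X.domain) : L ⟨(f, X f), X.mem_graph f⟩ = X.addI f := rfl
  have hrange : Set.range L = X.rangeAddI := by
    ext x
    constructor
    · rintro ⟨⟨_, hg⟩, rfl⟩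
      obtain ⟨f, rfl⟩ := X.mem_graph_iff'.mp hg
      exact ⟨f, (hL f).symm⟩
    · rintro ⟨f, rfl⟩
      exact ⟨_, hL f⟩
  have hanti : AntilipschitzWith 1 L := by
    refine L.antilipschitz_of_bound fun ⟨_, hg⟩ => ?_
    obtain ⟨f, rfl⟩ := X.mem_graph_iff'.mp hg
    rw [NNReal.coe_one, one_mul, hL]
    exact max_le (hX.norm_le_norm_addI f) (hX.norm_apply_le_norm_addI f)
  simpa [hrange] using hanti.isClosed_range L.uniformContinuous

theorem isCompl_rangeAddI_eigKer [CompleteSpace E] (hc : X.IsClosed) :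
    IsCompl X.rangeAddI (eigKer X) := by
  have : CompleteSpace X.rangeAddI := (hX.isClosed_rangeAddI hc).completeSpace_coe
  rw [eigKer_eq_orthogonal_rangeAddI]
  exact Submodule.isCompl_orthogonal _

theorem notMem_domain_of_mem_eigKer {v : E} (hv : v ∈ eigKer X) (hv0 : v ≠ 0) :
    v ∉ X.domain := by
  intro hvX
  have h := hX ⟨v, hvX⟩
  rw [hv ⟨v, hvX⟩, inner_smul_left, inner_self_eq_norm_sq_to_K] at h
  have : 0 < ‖v‖ := norm_pos_iff.mpr hv0
  simp only [Complex.conj_I, neg_mul, Complex.neg_im, Complex.I_mul_im, Complex.coe_algebraMap,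
    ← Complex.ofReal_pow, Complex.ofReal_re] at h
  nlinarith

theorem eq_of_le_of_rangeAddI_eq_top {Y : E →ₗ.[ℂ] E} (hYX : Y ≤ X) (htop : Y.rangeAddI = ⊤) :
    X = Y := by
  refine (eq_of_le_of_domain_eq hYX (le_antisymm hYX.1 fun x hx => ?_)).symm
  obtain ⟨f, hf⟩ : X.addI ⟨x, hx⟩ ∈ Y.rangeAddI := htop ▸ Submodule.mem_top
  have := hX.injective_addI ((addI_inclusion hYX f).trans hf)
  rw [← show (f : E) = x from congrArg Subtype.val this]
  exact f.2

end Dissipative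

theorem im_inner_add_smul_of_mem_eigKer {X : E →ₗ.[ℂ] E} {v : E} (hv : v ∈ eigKer X)
    (f : X.domain) (c : ℂ) :
    (⟪(f : E) + c • v, X f + c • (Complex.I • v)⟫).im
      = (⟪(f : E), X f⟫).im + Complex.normSq c * ‖v‖ ^ 2 := by
  have hvf : ⟪v, X f⟫ = -(Complex.I * starRingEnd ℂ ⟪(f : E), v⟫) := by
    rw [hv f, inner_smul_left, inner_conj_symm, Complex.conj_I, neg_mul]
  rw [inner_add_left, inner_add_right, inner_add_right, inner_smul_left, inner_smul_left,
    inner_smul_right, inner_smul_right, inner_smul_right, inner_smul_right, hvf,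
    inner_self_eq_norm_sq_to_K]
  simp only [Complex.add_im, Complex.mul_im, Complex.mul_re, Complex.neg_im, Complex.neg_re,
    Complex.conj_re, Complex.conj_im, Complex.I_re, Complex.I_im, Complex.normSq_apply,
    Complex.coe_algebraMap, ← Complex.ofReal_pow, Complex.ofReal_re]
  ring

theorem Dissipative.supSpanSingleton {X : E →ₗ.[ℂ] E} (hX : X.Dissipative) {v : E}
    (hv : v ∈ eigKer X) (hvX : v ∉ X.domain) :
    (X.supSpanSingleton v (Complex.I • v) hvX).Dissipative := by
  rintro ⟨g, hg⟩
  obtain ⟨y, hy, _, hc, rfl⟩ := Submodule.mem_sup.mp hg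
  obtain ⟨c, rfl⟩ := Submodule.mem_span_singleton.mp hc
  show 0 ≤ (⟪y + c • v, X.supSpanSingleton v (Complex.I • v) hvX ⟨y + c • v, hg⟩⟫).im
  rw [supSpanSingleton_apply_mk _ _ _ _ _ hy, RingHom.id_apply,
    im_inner_add_smul_of_mem_eigKer hv ⟨y, hy⟩]
  exact add_nonneg (hX ⟨y, hy⟩) (mul_nonneg (Complex.normSq_nonneg c) (sq_nonneg _))

theorem Dissipative.exists_ne_of_mem_eigKer {X : E →ₗ.[ℂ] E} (hX : X.Dissipative) {v : E}
    (hv : v ∈ eigKer X) (hv0 : v ≠ 0) :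
    ∃ C : E →ₗ.[ℂ] E, X ≤ C ∧ C.Dissipative ∧ C ≠ X := by
  have hvX := hX.notMem_domain_of_mem_eigKer hv hv0
  refine ⟨X.supSpanSingleton v (Complex.I • v) hvX, X.left_le_sup _ _,
    hX.supSpanSingleton hv hvX, fun h => hvX ?_⟩
  rw [← h, domain_supSpanSingleton]
  exact Submodule.mem_sup_right (Submodule.mem_span_singleton_self v)

theorem rank_quotient_domain_eq_rank_quotient_rangeAddI {A B : E →ₗ.[ℂ] E} (hAB : A ≤ B)
    (hB : Function.Injective B.addI) :
    Module.rank ℂ (B.domain ⧸ A.domain.comap B.domain.subtype)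
      = Module.rank ℂ (B.rangeAddI ⧸ A.rangeAddI.comap B.rangeAddI.subtype) := by
  let e : B.domain ≃ₗ[ℂ] B.rangeAddI := LinearEquiv.ofInjective B.addI hB
  refine (Submodule.Quotient.equiv _ _ e ?_).rank_eq
  ext y
  simp only [Submodule.mem_map, Submodule.mem_comap, Submodule.subtype_apply]
  constructor
  · rintro ⟨f, hf, rfl⟩
    exact ⟨⟨f, hf⟩, (addI_inclusion hAB ⟨f, hf⟩).symm⟩
  · rintro ⟨g, hg⟩
    exact ⟨Submodule.inclusion hAB.1 g, g.2, Subtype.ext ((addI_inclusion hAB g).trans hg)⟩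

variable [CompleteSpace E] {A B : E →ₗ.[ℂ] E} (hA : A.Dissipative) (hc : A.IsClosed)
  (hfin : FiniteDimensional ℂ (eigKer A)) (hAB : A ≤ B)
include hA hc hfin hAB

theorem orthogonal_rangeAddI_ne_bot (hne : B.rangeAddI ≠ ⊤) : B.rangeAddIᗮ ≠ ⊥ := by
  have hcompl := hA.isCompl_rangeAddI_eigKer hc
  have hle := rangeAddI_mono hAB
  have hsup : A.rangeAddI ⊔ eigKer A ⊓ B.rangeAddI = B.rangeAddI := hcompl.sup_inf_of_le hle
  have : FiniteDimensional ℂ (eigKer A ⊓ B.rangeAddI : Submodule ℂ E) :=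
    Submodule.finiteDimensional_of_le inf_le_left
  have hspan := Submodule.sup_orthogonal_inf_of_hasOrthogonalProjection
    (inf_le_left : eigKer A ⊓ B.rangeAddI ≤ eigKer A)
  have hne_bot : (eigKer A ⊓ B.rangeAddI)ᗮ ⊓ eigKer A ≠ ⊥ := by
    intro hbot
    rw [hbot, sup_bot_eq, inf_eq_left] at hspan
    exact hne (eq_top_iff.mpr (hcompl.sup_eq_top ▸ sup_le hle hspan))
  have horth : B.rangeAddIᗮ = eigKer A ⊓ (eigKer A ⊓ B.rangeAddI)ᗮ := by
    conv_lhs => rw [← hsup]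
    rw [← Submodule.inf_orthogonal, ← eigKer_eq_orthogonal_rangeAddI]
  rw [horth]
  exact ne_bot_of_le_ne_bot hne_bot (le_inf inf_le_right inf_le_left)

theorem forall_eq_iff_rangeAddI_eq_top (hB : B.Dissipative) :
    (∀ C : E →ₗ.[ℂ] E, B ≤ C → C.Dissipative → C = B) ↔ B.rangeAddI = ⊤ := by
  refine ⟨fun hmax => ?_, fun htop C hBC hC => hC.eq_of_le_of_rangeAddI_eq_top hBC htop⟩
  by_contra hne
  obtain ⟨v, hv, hv0⟩ :=
    Submodule.exists_mem_ne_zero_of_ne_bot (orthogonal_rangeAddI_ne_bot hA hc hfin hAB hne)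
  rw [← eigKer_eq_orthogonal_rangeAddI] at hv
  obtain ⟨C, hBC, hC, hCB⟩ := hB.exists_ne_of_mem_eigKer hv hv0
  exact hCB (hmax C hBC hC)

end LinearPMap

theorem stmt_19_general {E : Type*} [NormedAddCommGroup E] [InnerProductSpace ℂ E] [CompleteSpace E]
    (A : E →ₗ.[ℂ] E) (hclosed : A.IsClosed)
    (hdiss : ∀ f : A.domain, 0 ≤ (⟪(f : E), A f⟫).im)
    (hfin : FiniteDimensional ℂ (eigKer A))
    (B : E →ₗ.[ℂ] E) (hAB : A ≤ B)
    (hBdiss : ∀ f : B.domain, 0 ≤ (⟪(f : E), B f⟫).im) :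
    (∀ C : E →ₗ.[ℂ] E, B ≤ C → (∀ f : C.domain, 0 ≤ (⟪(f : E), C f⟫).im) → C = B) ↔
      Module.rank ℂ (B.domain ⧸ A.domain.comap B.domain.subtype)
        = Module.rank ℂ (eigKer A) := by
  have hA : A.Dissipative := hdiss
  have hB : B.Dissipative := hBdiss
  have hcompl := hA.isCompl_rangeAddI_eigKer hclosed
  have hle := LinearPMap.rangeAddI_mono hAB
  refine (LinearPMap.forall_eq_iff_rangeAddI_eq_top hA hclosed hfin hAB hB).trans ?_
  rw [LinearPMap.rank_quotient_domain_eq_rank_quotient_rangeAddI hAB hB.injective_addI,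
    Submodule.rank_quotient_comap_subtype_eq_rank_inf hcompl hle,
    Submodule.rank_eq_rank_iff_of_le inf_le_left, inf_eq_left, eq_top_iff,
    ← hcompl.sup_eq_top, sup_le_iff]
  exact and_iff_right hle

/-- **Criterion for maximal dissipativity of extensions.**
Let `A` be a closed, densely defined dissipative operator on a separable complex Hilbert
space with `dim ker (A* - i) < ∞`, and let `B` be a dissipative extension of `A`.  Then `B`
is maximally dissipative (i.e. has no nontrivial dissipative extension) if and only if
`dim (D(B) / D(A)) = dim ker (A* - i)`. -/
theorem stmt_19 {E : Type*} [NormedAddCommGroup E] [InnerProductSpace ℂ E] [CompleteSpace E]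
    [TopologicalSpace.SeparableSpace E]
    (A : E →ₗ.[ℂ] E) (hdense : Dense (A.domain : Set E)) (hclosed : A.IsClosed)
    (hdiss : ∀ f : A.domain, 0 ≤ (⟪(f : E), A f⟫).im)
    (hfin : FiniteDimensional ℂ (eigKer A))
    (B : E →ₗ.[ℂ] E) (hAB : A ≤ B)
    (hBdiss : ∀ f : B.domain, 0 ≤ (⟪(f : E), B f⟫).im) :
    (∀ C : E →ₗ.[ℂ] E, B ≤ C → (∀ f : C.domain, 0 ≤ (⟪(f : E), C f⟫).im) → C = B) ↔
      Module.rank ℂ (B.domain ⧸ A.domain.comap B.domain.subtype)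
        = Module.rank ℂ (eigKer A) :=
  stmt_19_general A hclosed hdiss hfin B hAB hBdiss
end
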